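/- arXiv:1909.10032 — 7 statements merged into one kernel-verified Lean document; each statement's English description precedes it below -/
import Mathlib

section
/- Let V : ℕ × ℤ → ℂ be a function defined for pairs (u,v) with u ≥ 3, satisfying: (i) V(u,v) = 2i·V(u-1,v) + (2i)^(u-1) for u ≥ 4 and v even; (ii) V(u,v) = 2i·V(u-1,v) − (2i)^(u-1) for u ≥ 4 and v odd; (iii) V(u,v) = V(u,v-2) − (2i)^(u+1) for v even; (iv) V(u,v) = V(u,v-2) + (2i)^(u+1) for v odd; (v) V(3,-1) = 4 and V(3,0) = -12. Then V(u,v) = (-1)^v · (2i)^(u-1) · (u + 2v) for all u ≥ 3 and v ∈ ℤ. -/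
open Complex

/-! The closed form satisfies both recurrences, so the difference `E = V - closed form` obeys
`E(u+1, v) = 2i·E(u, v)` and `E(3, v) = E(3, v - 2)`. The initial values make `E(3, ·)` vanish at
`-1` and `0`, hence everywhere by 2-periodicity, and then `E` vanishes for all `u ≥ 3`. -/

theorem eq_add_neg_one_zpow_mul {R : Type*} [DivisionRing R] {v : ℤ} {x a c : R}
    (heven : Even v → x = a + c) (hodd : Odd v → x = a - c) : x = a + (-1) ^ v * c := by
  rcases Int.even_or_odd v with hv | hv
  · rw [heven hv, hv.neg_one_zpow, one_mul]
  · rw [hodd hv, hv.neg_one_zpow, neg_one_mul, sub_eq_add_neg]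

theorem Function.Periodic.eq_zero_of_int_two {α : Type*} [Zero α] {f : ℤ → α}
    (hf : Function.Periodic f 2) (h0 : f 0 = 0) (h1 : f (-1) = 0) : f = 0 := by
  funext v
  obtain ⟨k, rfl | rfl⟩ := Int.even_or_odd' v
  · rw [Pi.zero_apply, ← h0, ← hf.zsmul_eq k, smul_eq_mul, mul_comm]
  · rw [Pi.zero_apply, ← h1, ← hf.sub_zsmul_eq (k + 1), smul_eq_mul]
    ring_nf

theorem two_mul_I_sq : (2 * I) ^ 2 = -4 := by
  rw [mul_pow, I_sq]
  norm_num

noncomputable def jonesClosedForm (u : ℕ) (v : ℤ) : ℂ :=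
  (-1 : ℂ) ^ v * (2 * I) ^ (u - 1) * ((u : ℂ) + 2 * (v : ℂ))

theorem jonesClosedForm_succ {u : ℕ} (hu : 1 ≤ u) (v : ℤ) :
    jonesClosedForm (u + 1) v = 2 * I * jonesClosedForm u v + (-1) ^ v * (2 * I) ^ u := by
  obtain ⟨n, rfl⟩ := Nat.exists_eq_add_of_le hu
  simp only [jonesClosedForm, Nat.add_sub_cancel, Nat.add_sub_cancel_left]
  push_cast
  ring

theorem jonesClosedForm_add_two {u : ℕ} (hu : 1 ≤ u) (v : ℤ) :
    jonesClosedForm u (v + 2) = jonesClosedForm u v - (-1) ^ v * (2 * I) ^ (u + 1) := by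
  obtain ⟨n, rfl⟩ := Nat.exists_eq_add_of_le hu
  simp only [jonesClosedForm, Nat.add_sub_cancel_left, zpow_add₀ (by norm_num : (-1 : ℂ) ≠ 0)]
  rw [show 1 + n + 1 = n + 2 by ring, pow_add, two_mul_I_sq]
  push_cast
  ring

/-- The recurrences for the values `V_{u,v}` of the Jones polynomials of the links
`L_{u,v}` at `t^{1/2} = -i` determine `V(u,v) = (-1)^v (2i)^(u-1) (u+2v)` for all `u ≥ 3`. -/
theorem stmt2 (V : ℕ × ℤ → ℂ)
    (h1 : ∀ (u : ℕ) (v : ℤ), 4 ≤ u → Even v →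
      V (u, v) = 2 * I * V (u - 1, v) + (2 * I) ^ (u - 1))
    (h2 : ∀ (u : ℕ) (v : ℤ), 4 ≤ u → Odd v →
      V (u, v) = 2 * I * V (u - 1, v) - (2 * I) ^ (u - 1))
    (h3 : ∀ (u : ℕ) (v : ℤ), 3 ≤ u → Even v →
      V (u, v) = V (u, v - 2) - (2 * I) ^ (u + 1))
    (h4 : ∀ (u : ℕ) (v : ℤ), 3 ≤ u → Odd v →
      V (u, v) = V (u, v - 2) + (2 * I) ^ (u + 1))
    (h5 : V (3, -1) = 4) (h6 : V (3, 0) = -12) :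
    ∀ (u : ℕ) (v : ℤ), 3 ≤ u →
      V (u, v) = (-1 : ℂ) ^ v * (2 * I) ^ (u - 1) * ((u : ℂ) + 2 * (v : ℂ)) := by
  have hstep_u : ∀ u ≥ 3, ∀ v, V (u + 1, v) = 2 * I * V (u, v) + (-1) ^ v * (2 * I) ^ u :=
    fun u hu v => eq_add_neg_one_zpow_mul (h1 (u + 1) v (by omega)) (h2 (u + 1) v (by omega))
  have hstep_v : ∀ v, V (3, v + 2) = V (3, v) - (-1) ^ v * (2 * I) ^ 4 := by
    intro v
    have h := eq_add_neg_one_zpow_mul (v := v) (x := V (3, v + 2)) (a := V (3, v))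
      (c := -(2 * I) ^ 4)
      (fun hv => by rw [h3 3 (v + 2) le_rfl (by simpa using hv), add_sub_cancel_right]; ring)
      (fun hv => by rw [h4 3 (v + 2) le_rfl (by simpa using hv), add_sub_cancel_right]; ring)
    rw [h]; ring
  have hbase : ∀ v, V (3, v) = jonesClosedForm 3 v := by
    have hperiodic : Function.Periodic (fun v => V (3, v) - jonesClosedForm 3 v) 2 := fun v => by
      simp only [hstep_v, jonesClosedForm_add_two (by norm_num : 1 ≤ 3)]
      ring
    have hE := hperiodic.eq_zero_of_int_two
      (by simp [h6, jonesClosedForm, two_mul_I_sq]; norm_num)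
      (by simp [h5, jonesClosedForm, two_mul_I_sq]; norm_num)
    exact fun v => sub_eq_zero.1 (congrFun hE v)
  intro u v hu
  change V (u, v) = jonesClosedForm u v
  induction u, hu using Nat.le_induction generalizing v with
  | base => exact hbase v
  | succ u hu ih => rw [hstep_u u hu, ih, jonesClosedForm_succ (by omega)]
end

section
/- Let m ≥ 1 and let G be the group presented by generators g_1, …, g_m subject to the relations [g_i, g_{i+1}] = 1 for i = 1, …, m−1. Then for each i, the centralizer of g_i in G equals the subgroup generated by {g_{i-1}, g_i, g_{i+1}} ∩ {g_1,…,g_m} (i.e., by g_{i-1}, g_i, g_{i+1}, omitting indices out of range). -/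
/-- The commutation relations `[g_i, g_{i+1}] = 1` (as elements of the free group on `Fin m`)
presenting the right-angled Artin group on the path graph with `m` vertices. -/
def pathRels (m : ℕ) : Set (FreeGroup (Fin m)) :=
  {r | ∃ i j : Fin m, (i : ℕ) + 1 = (j : ℕ) ∧
    r = FreeGroup.of i * FreeGroup.of j * (FreeGroup.of i)⁻¹ * (FreeGroup.of j)⁻¹}

/-- The group `⟨g_1, …, g_m ∣ [g_i, g_{i+1}] = 1⟩`. -/
abbrev PathGroup (m : ℕ) := PresentedGroup (pathRels m)

/-- The generator `g_i` of `PathGroup m`. -/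
def pathGen (m : ℕ) (i : Fin m) : PathGroup m := PresentedGroup.of i

/-!
Cutting the path at a vertex `g_v` writes `PathGroup m` as the amalgamated product of the groups
of the subpaths `[0, v]` and `[v, m - 1]` over `⟨g_v⟩ ≅ ℤ`. In an amalgam, if no conjugate of an
element `c` of a factor lies in the base group, then the centralizer of `c` lies in that factor:
write `x = a w` with `a` in the factor of `c` and `w` a reduced word not starting there; then
`w⁻¹ (a⁻¹ c a) w` is a reduced word of length `2 |w| + 1` representing the one-letter word `c`,
so `w = 1` by uniqueness of normal forms. Exponent sums show that `g_i` has no conjugate in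
`⟨g_v⟩` for `v ≠ i`, so cutting at `g_{i+1}` and at `g_{i-1}` confines the centralizer of `g_i`
to the group of the path `g_{i-1}, g_i, g_{i+1}`, where `g_i` is central.
-/

namespace Monoid.PushoutI

open CoprodI

variable {ι : Type*} {G : ι → Type*} [∀ i, Group (G i)] {H : Type*} [Group H]
  {φ : ∀ i, H →* G i}

theorem NormalWord.reduced {d : NormalWord.Transversal φ} (w : NormalWord d) :
    Reduced φ w.toWord := by
  rintro ⟨i, g⟩ hg hrange
  apply w.ne_one _ hg
  have hset : ((d.compl i).equiv g).2 = g :=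
    (d.compl i).equiv_snd_eq_self_iff_mem (one_mem _) |>.2 (w.normalized i _ hg)
  rw [← hset]
  exact (d.compl i).coe_equiv_snd_eq_one_iff_mem (d.one_mem i) |>.2 hrange

theorem Reduced.map_fst_eq_of_prod_eq (hφ : ∀ i, Function.Injective (φ i)) {w₁ w₂ : Word G}
    (h₁ : Reduced φ w₁) (h₂ : Reduced φ w₂)
    (h : ofCoprodI (φ := φ) w₁.prod = ofCoprodI w₂.prod) :
    w₁.toList.map Sigma.fst = w₂.toList.map Sigma.fst := by
  obtain ⟨d⟩ := NormalWord.transversal_nonempty φ hφ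
  obtain ⟨w₁', hprod₁, hfst₁⟩ := h₁.exists_normalWord_prod_eq d
  obtain ⟨w₂', hprod₂, hfst₂⟩ := h₂.exists_normalWord_prod_eq d
  rw [← hfst₁, ← hfst₂, NormalWord.prod_injective (hprod₁.trans (h.trans hprod₂.symm))]

theorem Reduced.neWord_inv {i j : ι} {w : NeWord G i j} (hw : Reduced φ w.toWord) :
    Reduced φ w.inv.toWord := by
  induction w with
  | singleton x _ =>
    rintro _ hl
    obtain rfl := List.mem_singleton.1 hl
    simpa using hw _ List.mem_cons_self
  | append w₁ _ w₂ ih₁ ih₂ =>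
    rintro l hl
    rcases List.mem_append.1 hl with hl | hl
    · exact ih₂ (fun l hl => hw l (List.mem_append_right _ hl)) l hl
    · exact ih₁ (fun l hl => hw l (List.mem_append_left _ hl)) l hl

theorem exists_eq_of_mul_ofCoprodI_prod (hφ : ∀ i, Function.Injective (φ i)) (i : ι)
    (x : PushoutI φ) :
    ∃ (a : G i) (w : Word G), Reduced φ w ∧ w.fstIdx ≠ some i ∧
      x = of i a * ofCoprodI w.prod := by
  classical
  obtain ⟨d⟩ := NormalWord.transversal_nonempty φ hφ
  set w : NormalWord d := x • NormalWord.empty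
  have hx : w.prod = x := by simp [w]
  set p := Word.equivPair i w.toWord
  refine ⟨φ i w.head * p.head, p.tail,
    fun ⟨j, g⟩ hg => w.reduced _ (Word.mem_of_mem_equivPair_tail g hg), p.fstIdx_ne, ?_⟩
  rw [← hx, NormalWord.prod, map_mul, of_apply_eq_base, mul_assoc, ← ofCoprodI_of, ← map_mul,
    ← Word.prod_rcons, ← Word.equivPair_symm, Equiv.symm_apply_apply]

theorem conj_neWord_ne_of (hφ : ∀ i, Function.Injective (φ i)) {i k l : ι} (w : NeWord G k l)
    (hw : Reduced φ w.toWord) (hk : k ≠ i) {c c' : G i} (hc : c ∉ (φ i).range)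
    (hc' : c' ∉ (φ i).range) :
    (ofCoprodI (φ := φ) w.prod)⁻¹ * of i c' * ofCoprodI w.prod ≠ of i c := by
  intro h
  set S := w.inv.append hk ((NeWord.singleton c' fun h => hc' (h ▸ one_mem _)).append hk.symm w)
  set T := NeWord.singleton c fun h => hc (h ▸ one_mem _)
  have hS : Reduced φ S.toWord := by
    rintro l hl
    simp only [S, NeWord.toWord, NeWord.toList, List.mem_append, List.mem_singleton] at hl
    rcases hl with hl | rfl | hl
    · exact hw.neWord_inv l hl
    · exact hc'
    · exact hw l hl
  have hT : Reduced φ T.toWord := by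
    rintro l hl
    obtain rfl := List.mem_singleton.1 hl
    exact hc
  have hprod : ofCoprodI (φ := φ) S.prod = ofCoprodI T.prod := by
    simpa [S, T, mul_assoc] using h
  have hlen := congrArg List.length (hS.map_fst_eq_of_prod_eq hφ hT hprod)
  have hw₀ := List.length_pos_of_ne_nil w.toList_ne_nil
  simp only [S, T, NeWord.toWord, NeWord.toList, List.map_append, List.map_cons, List.map_nil,
    List.length_append, List.length_map, List.length_cons, List.length_nil] at hlen
  omega

theorem mem_range_of_commute_of (hφ : ∀ i, Function.Injective (φ i)) {i : ι} {c : G i}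
    (hc : ∀ y : G i, y⁻¹ * c * y ∉ (φ i).range) {x : PushoutI φ}
    (hx : Commute x (of i c)) : x ∈ (of i).range := by
  obtain ⟨a, w, hw, hfst, rfl⟩ := exists_eq_of_mul_ofCoprodI_prod hφ i x
  suffices w = .empty from ⟨a, by simp [this]⟩
  by_contra hne
  obtain ⟨k, l, w, rfl⟩ := NeWord.of_word w hne
  have hk : k ≠ i := fun h => hfst (by simp [Word.fstIdx, NeWord.toWord, h])
  refine conj_neWord_ne_of hφ w hw hk (by simpa using hc 1) (hc a) ?_
  change Commute (of i a * ofCoprodI w.prod) _ at hx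
  calc (ofCoprodI w.prod)⁻¹ * of i (a⁻¹ * c * a) * ofCoprodI w.prod
      = (of i a * ofCoprodI w.prod)⁻¹ * (of i c * (of i a * ofCoprodI w.prod)) := by
        simp only [map_mul, map_inv]
        group
    _ = of i c := by
        rw [← hx.eq]
        group

end Monoid.PushoutI

namespace PathGroup

variable {m : ℕ}

theorem commute_pathGen {i j : Fin m} (h : (i : ℕ) + 1 = j) :
    Commute (pathGen m i) (pathGen m j) := by
  have hrel := PresentedGroup.one_of_mem (rels := pathRels m) ⟨i, j, h, rfl⟩
  simp only [map_mul, map_inv] at hrel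
  exact mul_inv_eq_iff_eq_mul.mp (mul_inv_eq_one.mp hrel)

theorem commute_pathGen_of_le {i j : Fin m} (h : (j : ℕ) ≤ i + 1 ∧ (i : ℕ) ≤ j + 1) :
    Commute (pathGen m i) (pathGen m j) := by
  rcases (by omega : (i : ℕ) + 1 = j ∨ i = j ∨ (j : ℕ) + 1 = i) with h | rfl | h
  · exact commute_pathGen h
  · exact Commute.refl _
  · exact (commute_pathGen h).symm

variable {K : Type*} [Group K]

def lift (f : Fin m → K) (hf : ∀ i j : Fin m, (i : ℕ) + 1 = j → Commute (f i) (f j)) :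
    PathGroup m →* K :=
  PresentedGroup.toGroup (rels := pathRels m) (f := f) <| by
    rintro r ⟨i, j, hij, rfl⟩
    simp [(hf i j hij).eq]

@[simp]
theorem lift_pathGen (f : Fin m → K) (hf) (i : Fin m) : lift f hf (pathGen m i) = f i :=
  PresentedGroup.toGroup.of _

theorem hom_ext {f g : PathGroup m →* K} (h : ∀ i, f (pathGen m i) = g (pathGen m i)) :
    f = g :=
  PresentedGroup.ext h

def expSum (j : Fin m) : PathGroup m →* Multiplicative ℤ :=
  lift (Pi.mulSingle j (.ofAdd 1)) fun _ _ _ => Commute.all _ _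

theorem expSum_zpow_pathGen (j : Fin m) (k : ℤ) :
    expSum j (pathGen m j ^ k) = .ofAdd k := by
  simp [expSum, ← ofAdd_zsmul]

theorem injective_zpowersHom_pathGen (j : Fin m) :
    Function.Injective (zpowersHom (PathGroup m) (pathGen m j)) := fun a b h => by
  simpa [expSum_zpow_pathGen] using congrArg (expSum j) h

theorem conj_pathGen_notMem_zpowers {i j : Fin m} (hij : i ≠ j) (y : PathGroup m) :
    y⁻¹ * pathGen m i * y ∉ Subgroup.zpowers (pathGen m j) := by
  rintro ⟨k, hk⟩
  simpa [expSum, hij] using (congrArg (expSum i) hk).symm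

def shift {n : ℕ} (a : ℕ) (h : a + n ≤ m) : PathGroup n →* PathGroup m :=
  lift (fun j => pathGen m ⟨a + j, by omega⟩) fun _ _ hij =>
    commute_pathGen (by simp only; omega)

theorem shift_pathGen {n : ℕ} (a : ℕ) (h : a + n ≤ m) (j : Fin n) :
    shift a h (pathGen n j) = pathGen m ⟨a + j, by omega⟩ :=
  lift_pathGen _ _ j

def starSubgroup (m : ℕ) (i : Fin m) : Subgroup (PathGroup m) :=
  Subgroup.closure {x | ∃ j : Fin m,
    ((j : ℕ) ≤ (i : ℕ) + 1 ∧ (i : ℕ) ≤ (j : ℕ) + 1) ∧ x = pathGen m j}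

theorem map_shift_starSubgroup_le {n a : ℕ} (h : a + n ≤ m) {j : Fin n} {i : Fin m}
    (hij : a + j = i) : (starSubgroup n j).map (shift a h) ≤ starSubgroup m i := by
  rw [starSubgroup, MonoidHom.map_closure]
  refine Subgroup.closure_mono ?_
  rintro _ ⟨_, ⟨k, hk, rfl⟩, rfl⟩
  exact ⟨_, by simp only; omega, shift_pathGen a h k⟩

theorem starSubgroup_le_centralizer (i : Fin m) :
    starSubgroup m i ≤ Subgroup.centralizer {pathGen m i} := by
  refine (Subgroup.closure_le _).2 ?_
  rintro _ ⟨j, hj, rfl⟩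
  exact Subgroup.mem_centralizer_singleton_iff.2 (commute_pathGen_of_le hj).eq.symm

theorem starSubgroup_eq_top {i : Fin m} (hm : m ≤ i + 2) (hi : (i : ℕ) ≤ 1) :
    starSubgroup m i = ⊤ := by
  refine top_le_iff.1 ?_
  rw [← PresentedGroup.closure_range_of]
  refine Subgroup.closure_mono ?_
  rintro _ ⟨j, rfl⟩
  exact ⟨j, by omega, rfl⟩

section Splitting

open Monoid PushoutI

variable (m v : ℕ)

-- Cut at `v`, the path `[0, m - 1]` has the pieces `[0, v]` (`true`) and `[v, m - 1]` (`false`).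
def pieceLen (b : Bool) : ℕ := bif b then v + 1 else m - v

def pieceStart (b : Bool) : ℕ := bif b then 0 else v

variable {m v} (hv : v < m)

include hv in
theorem pieceStart_add_pieceLen (b : Bool) : pieceStart v b + pieceLen m v b ≤ m := by
  cases b <;> simp [pieceStart, pieceLen] <;> omega

def pieceJoint : (b : Bool) → Fin (pieceLen m v b)
  | true => Fin.last v
  | false => ⟨0, by simp [pieceLen]; omega⟩

def jointHom (b : Bool) : Multiplicative ℤ →* PathGroup (pieceLen m v b) :=
  zpowersHom _ (pathGen _ (pieceJoint hv b))

theorem injective_jointHom (b : Bool) : Function.Injective (jointHom hv b) :=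
  injective_zpowersHom_pathGen _

theorem of_pieceJoint (b : Bool) :
    of (φ := jointHom hv) b (pathGen _ (pieceJoint hv b)) = base _ (.ofAdd 1) := by
  rw [← of_apply_eq_base _ b]
  simp [jointHom]

theorem of_true_eq_of_false :
    of (φ := jointHom hv) true (pathGen (v + 1) (Fin.last v)) =
      of false (pathGen (m - v) ⟨0, by omega⟩) :=
  (of_pieceJoint hv true).trans (of_pieceJoint hv false).symm

def toPushout : PathGroup m →* PushoutI (jointHom hv) :=
  PathGroup.lift (fun k => if h : (k : ℕ) ≤ v then of true (pathGen (v + 1) ⟨k, by omega⟩)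
      else of false (pathGen (m - v) ⟨k - v, by omega⟩)) fun i j hij => by
    by_cases hj : (j : ℕ) ≤ v
    · rw [dif_pos (by omega), dif_pos hj]
      exact (commute_pathGen (by simpa using hij)).map _
    by_cases hi : (i : ℕ) ≤ v
    · rw [dif_pos hi, dif_neg hj, show (⟨i, _⟩ : Fin (v + 1)) = Fin.last v by ext; simp; omega,
        of_true_eq_of_false]
      exact (commute_pathGen (by simp; omega)).map _
    · rw [dif_neg hi, dif_neg hj]
      exact (commute_pathGen (by simp; omega)).map _

def fromPushout : PushoutI (jointHom hv) →* PathGroup m :=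
  PushoutI.lift (fun b => shift _ (pieceStart_add_pieceLen hv b))
    (zpowersHom _ (pathGen m ⟨v, hv⟩)) fun b => MonoidHom.ext_mint <| by
      simp only [jointHom, MonoidHom.comp_apply, zpowersHom_apply, toAdd_ofAdd, zpow_one,
        shift_pathGen, pieceJoint]
      congr
      cases b <;> simp [pieceStart]

theorem fromPushout_of (b : Bool) (y : PathGroup (pieceLen m v b)) :
    fromPushout hv (of b y) = shift _ (pieceStart_add_pieceLen hv b) y :=
  PushoutI.lift_of ..

theorem fromPushout_toPushout (x : PathGroup m) : fromPushout hv (toPushout hv x) = x := by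
  suffices (fromPushout hv).comp (toPushout hv) = .id _ from DFunLike.congr_fun this x
  refine hom_ext fun k => ?_
  simp only [MonoidHom.comp_apply, MonoidHom.id_apply, toPushout, lift_pathGen]
  split_ifs with hk
  · exact ((fromPushout_of hv true _).trans (shift_pathGen _ _ _)).trans
      (congrArg _ (Fin.ext (by simp [pieceStart])))
  · exact ((fromPushout_of hv false _).trans (shift_pathGen _ _ _)).trans
      (congrArg _ (Fin.ext (by simp [pieceStart]; omega)))

theorem toPushout_shift (b : Bool) (y : PathGroup (pieceLen m v b)) :
    toPushout hv (shift _ (pieceStart_add_pieceLen hv b) y) = of b y := by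
  suffices (toPushout hv).comp (shift _ (pieceStart_add_pieceLen hv b)) =
      of (φ := jointHom hv) b from DFunLike.congr_fun this y
  refine hom_ext fun j => ?_
  simp only [MonoidHom.comp_apply, shift_pathGen, toPushout, lift_pathGen]
  have hj := j.isLt
  cases b
  · simp only [pieceLen, cond_false] at hj
    by_cases h : j = pieceJoint hv false
    · subst h
      rw [dif_pos (by simp [pieceStart, pieceJoint]), of_pieceJoint]
      exact (congrArg _ (congrArg _ (Fin.ext (by simp [pieceStart, pieceJoint])))).trans
        (of_pieceJoint hv true)
    · have : (j : ℕ) ≠ 0 := fun h0 => h (Fin.ext h0)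
      rw [dif_neg (by simp [pieceStart]; omega)]
      exact congrArg _ (congrArg _ (Fin.ext (by simp [pieceStart])))
  · simp only [pieceLen, cond_true] at hj
    rw [dif_pos (by simp [pieceStart]; omega)]
    exact congrArg _ (congrArg _ (Fin.ext (by simp [pieceStart])))

theorem centralizer_shift_le_map (b : Bool) {j : Fin (pieceLen m v b)}
    (hj : j ≠ pieceJoint hv b) :
    Subgroup.centralizer {shift _ (pieceStart_add_pieceLen hv b) (pathGen _ j)} ≤
      (Subgroup.centralizer {pathGen _ j}).map (shift _ (pieceStart_add_pieceLen hv b)) := by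
  intro x hx
  have hcomm : Commute (toPushout hv x) (of b (pathGen _ j)) := by
    rw [← toPushout_shift hv b]
    exact (show Commute x _ from Subgroup.mem_centralizer_singleton_iff.1 hx).map _
  obtain ⟨y, hy⟩ := mem_range_of_commute_of (injective_jointHom hv)
    (conj_pathGen_notMem_zpowers hj) hcomm
  refine ⟨y, Subgroup.mem_centralizer_singleton_iff.2 ?_, ?_⟩
  · rw [← hy] at hcomm
    exact of_injective (injective_jointHom hv) b (by simpa using hcomm.eq)
  · rw [← fromPushout_of hv]
    exact (congrArg (fromPushout hv) hy).trans (fromPushout_toPushout hv x)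

end Splitting

theorem centralizer_le_starSubgroup_of_piece {m v : ℕ} (hv : v < m) (b : Bool)
    {j : Fin (pieceLen m v b)} (hj : j ≠ pieceJoint hv b) {i : Fin m}
    (hji : pieceStart v b + j = i)
    (ih : Subgroup.centralizer {pathGen _ j} ≤ starSubgroup _ j) :
    Subgroup.centralizer {pathGen m i} ≤ starSubgroup m i := by
  have hi : pathGen m i = shift _ (pieceStart_add_pieceLen hv b) (pathGen _ j) := by
    rw [shift_pathGen]
    exact congrArg _ (Fin.ext hji.symm)
  rw [hi]
  exact (centralizer_shift_le_map hv b hj).trans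
    ((Subgroup.map_mono ih).trans (map_shift_starSubgroup_le _ hji))

theorem centralizer_le_starSubgroup (m : ℕ) (i : Fin m) :
    Subgroup.centralizer {pathGen m i} ≤ starSubgroup m i := by
  induction m using Nat.strong_induction_on with
  | _ m ih =>
  by_cases hright : (i : ℕ) + 2 < m
  -- cut at `g_{i+1}`, keeping the piece `[0, i + 1]`
  · exact centralizer_le_starSubgroup_of_piece (v := i + 1) (by omega) true
      (j := ⟨i, by simp [pieceLen]⟩)
      (fun h => absurd (congrArg Fin.val h) (by simp [pieceJoint]))
      (by simp [pieceStart]) (ih _ (by simp [pieceLen]; omega) _)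
  by_cases hleft : 2 ≤ (i : ℕ)
  -- cut at `g_{i-1}`, keeping the piece `[i - 1, m - 1]`
  · exact centralizer_le_starSubgroup_of_piece (v := i - 1) (by omega) false
      (j := ⟨1, by simp [pieceLen]; omega⟩) (by simp [pieceJoint])
      (by simp [pieceStart]; omega) (ih _ (by simp [pieceLen]; omega) _)
  rw [starSubgroup_eq_top (by omega) (by omega)]
  exact le_top

end PathGroup

theorem stmt3_general (m : ℕ) (i : Fin m) :
    Subgroup.centralizer {pathGen m i} =
      Subgroup.closure {x | ∃ j : Fin m,
        ((j : ℕ) ≤ (i : ℕ) + 1 ∧ (i : ℕ) ≤ (j : ℕ) + 1) ∧ x = pathGen m j} :=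
  le_antisymm (PathGroup.centralizer_le_starSubgroup m i) (PathGroup.starSubgroup_le_centralizer i)

/-- In `G = ⟨g_1,…,g_m ∣ [g_i,g_{i+1}]=1⟩`, the centralizer of `g_i` is the subgroup generated
by the generators `g_j` with `|i - j| ≤ 1`. -/
theorem stmt3 (m : ℕ) (hm : 1 ≤ m) (i : Fin m) :
    Subgroup.centralizer {pathGen m i} =
      Subgroup.closure {x | ∃ j : Fin m,
        ((j : ℕ) ≤ (i : ℕ) + 1 ∧ (i : ℕ) ≤ (j : ℕ) + 1) ∧ x = pathGen m j} :=
  stmt3_general m i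
end

section
/- Let V be a finite-dimensional complex vector space, let (f_k) be a sequence of linear endomorphisms of V converging to a linear endomorphism f, and let Λ ⊆ ℂ be a closed subset. For an endomorphism g, let E(g,Λ) denote the sum of the generalized eigenspaces of g for eigenvalues lying in Λ. Then dim E(f,Λ) ≥ limsup_{k→∞} dim E(f_k,Λ). -/
/-!
Pass to a subsequence along which `dim E(f k, Λ) = m`. The characteristic polynomial of `f k`
restricted to `E(f k, Λ)` is a product `∏ i < m, (X - r k i)` that kills `E(f k, Λ)`, and its roots
`r k i` are eigenvalues of `f k` in `Λ`, hence bounded by the operator norms of the convergent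
sequence. As `Λ` is closed, the root tuples then converge along a further subsequence to a tuple
`r` in `Λ`, so `∏ i, (f k - r k i)` converges to `∏ i, (f - r i)`. Kernel dimension is upper
semicontinuous (rank is lower semicontinuous, as linear independence is an open condition), so
`ker ∏ i, (f - r i)` has dimension at least `m`; it lies in `E(f, Λ)` because all the `r i` lie
in `Λ`.
-/

open Filter Polynomial Module Topology

theorem Multiset.exists_map_univ_eq {α : Type*} {s : Multiset α} {m : ℕ}
    (h : Multiset.card s = m) : ∃ r : Fin m → α, Finset.univ.val.map r = s := by
  subst h
  obtain ⟨l, rfl⟩ := Quot.exists_rep s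
  refine ⟨fun i => l[i], ?_⟩
  rw [Fin.univ_val_map]
  simp

theorem Polynomial.Monic.exists_eq_prod_X_sub_C {K : Type*} [Field K] [IsAlgClosed K]
    {p : K[X]} (hp : p.Monic) {m : ℕ} (hm : p.natDegree = m) :
    ∃ r : Fin m → K, p = ∏ i, (X - C (r i)) ∧ ∀ i, p.IsRoot (r i) := by
  obtain ⟨r, hr⟩ := Multiset.exists_map_univ_eq (IsAlgClosed.card_roots_eq_natDegree.trans hm)
  refine ⟨r, ?_, fun i => isRoot_of_mem_roots (hr ▸ Multiset.mem_map_of_mem r (Finset.mem_univ i))⟩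
  conv_lhs => rw [(IsAlgClosed.splits p).eq_prod_roots_of_monic hp, ← hr, Multiset.map_map]
  rfl

theorem Polynomial.exists_eq_of_isRoot_prod_X_sub_C {R ι : Type*} [CommRing R] [IsDomain R]
    {s : Finset ι} {r : ι → R} {μ : R} (h : (∏ i ∈ s, (X - C (r i))).IsRoot μ) :
    ∃ i ∈ s, μ = r i := by
  simpa [IsRoot, eval_prod, Finset.prod_eq_zero_iff, sub_eq_zero] using h

theorem Polynomial.tendsto_aeval_prod_X_sub_C {R A α ι : Type*} [CommRing R] [TopologicalSpace R]
    [Ring A] [Algebra R A] [TopologicalSpace A] [IsTopologicalRing A] [ContinuousSMul R A]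
    {l : Filter α} (s : Finset ι) {a : α → A} {a₀ : A} {r : α → ι → R} {r₀ : ι → R}
    (ha : Tendsto a l (𝓝 a₀)) (hr : Tendsto r l (𝓝 r₀)) :
    Tendsto (fun x => aeval (a x) (∏ i ∈ s, (X - C (r x i)))) l
      (𝓝 (aeval a₀ (∏ i ∈ s, (X - C (r₀ i))))) := by
  classical
  induction s using Finset.induction with
  | empty => simpa using tendsto_const_nhds
  | insert i s hi ih =>
    simp only [Finset.prod_insert hi, map_mul, map_sub, aeval_X, aeval_C]
    refine (ha.sub ?_).mul ih
    exact (continuous_algebraMap R A).tendsto _ |>.comp ((continuous_apply i).tendsto _ |>.comp hr)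

theorem LinearMap.aeval_restrict_apply {K V : Type*} [Field K] [AddCommGroup V] [Module K V]
    (g : Module.End K V) {E : Submodule K V} (h : ∀ x ∈ E, g x ∈ E) (p : K[X]) (x : E) :
    (aeval (g.restrict h) p x : V) = aeval g p x := by
  induction p using Polynomial.induction_on' with
  | add p q hp hq => simp [hp, hq]
  | monomial n a =>
    simp [aeval_monomial, Module.End.pow_restrict n h, Module.algebraMap_end_eq_smul_id]

namespace Module.End

variable {K V : Type*} [Field K] [AddCommGroup V] [Module K V] (g : End K V) (Λ : Set K)

theorem mapsTo_iSup_maxGenEigenspace :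
    ∀ x ∈ ⨆ μ ∈ Λ, g.maxGenEigenspace μ, g x ∈ ⨆ μ ∈ Λ, g.maxGenEigenspace μ := by
  have : (⨆ μ ∈ Λ, g.maxGenEigenspace μ).map g ≤ ⨆ μ ∈ Λ, g.maxGenEigenspace μ := by
    simp only [Submodule.map_iSup]
    exact iSup₂_mono fun μ _ => Submodule.map_le_iff_le_comap.2 fun x hx =>
      g.mapsTo_maxGenEigenspace_of_comm (Commute.refl g) μ hx
  exact fun x hx => this ⟨x, hx, rfl⟩

theorem disjoint_eigenspace_iSup_maxGenEigenspace {μ : K} (h : ¬ (g.HasEigenvalue μ ∧ μ ∈ Λ)) :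
    Disjoint (g.eigenspace μ) (⨆ ν ∈ Λ, g.maxGenEigenspace ν) := by
  by_cases hμ : g.HasEigenvalue μ
  · exact (g.independent_maxGenEigenspace.disjoint_biSup fun hμΛ => h ⟨hμ, hμΛ⟩).mono_left
      eigenspace_le_maxGenEigenspace
  · simp [hasEigenvalue_iff.not_left.mp hμ]

theorem hasEigenvalue_of_hasEigenvalue_restrict_iSup_maxGenEigenspace {μ : K}
    (hμ : HasEigenvalue (g.restrict (g.mapsTo_iSup_maxGenEigenspace Λ)) μ) :
    g.HasEigenvalue μ ∧ μ ∈ Λ := by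
  by_contra h
  exact hasEigenvalue_iff.mp hμ
    (eigenspace_restrict_eq_bot _ (g.disjoint_eigenspace_iSup_maxGenEigenspace Λ h))

theorem exists_iSup_maxGenEigenspace_le_ker_aeval_prod [IsAlgClosed K] [FiniteDimensional K V]
    {m : ℕ} (hm : finrank K (⨆ μ ∈ Λ, g.maxGenEigenspace μ : Submodule K V) = m) :
    ∃ r : Fin m → K, (∀ i, g.HasEigenvalue (r i) ∧ r i ∈ Λ) ∧
      ⨆ μ ∈ Λ, g.maxGenEigenspace μ ≤ LinearMap.ker (aeval g (∏ i, (X - C (r i)))) := by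
  set g' := g.restrict (g.mapsTo_iSup_maxGenEigenspace Λ)
  obtain ⟨r, hp, hroot⟩ :=
    g'.charpoly_monic.exists_eq_prod_X_sub_C (g'.charpoly_natDegree.trans hm)
  refine ⟨r, fun i => g.hasEigenvalue_of_hasEigenvalue_restrict_iSup_maxGenEigenspace Λ
    ((hasEigenvalue_iff_isRoot_charpoly g' (r i)).2 (hroot i)), fun x hx => ?_⟩
  rw [LinearMap.mem_ker, ← hp,
    ← LinearMap.aeval_restrict_apply g (g.mapsTo_iSup_maxGenEigenspace Λ) _ ⟨x, hx⟩,
    LinearMap.aeval_self_charpoly]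
  rfl

theorem ker_aeval_le_iSup_maxGenEigenspace [IsAlgClosed K] [FiniteDimensional K V] {q : K[X]}
    (hq : ∀ μ, q.IsRoot μ → μ ∈ Λ) :
    LinearMap.ker (aeval g q) ≤ ⨆ μ ∈ Λ, g.maxGenEigenspace μ := by
  have hcomm : Commute g (aeval g q) := by simpa using (Commute.all X q).map (aeval g)
  have hinv : ∀ x ∈ LinearMap.ker (aeval g q), g x ∈ LinearMap.ker (aeval g q) := by
    intro x hx
    rw [LinearMap.mem_ker] at hx ⊢
    rw [← Module.End.mul_apply, ← hcomm.eq, Module.End.mul_apply, hx, map_zero]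
  rw [Submodule.eq_iSup_inf_genEigenspace ⊤ hinv g.iSup_maxGenEigenspace_eq_top]
  refine iSup_le fun μ => ?_
  by_cases hμ : q.IsRoot μ
  · exact inf_le_right.trans (le_biSup (fun ν => g.maxGenEigenspace ν) (hq μ hμ))
  · rintro x ⟨hxq, hxμ⟩
    obtain ⟨k, hk⟩ := (g.mem_maxGenEigenspace μ x).1 hxμ
    have hcop : IsCoprime q ((X - C μ) ^ k) :=
      ((irreducible_X_sub_C μ).coprime_iff_not_dvd.2 (mt dvd_iff_isRoot.1 hμ)).symm.pow_right
    have hx0 : x = 0 := (disjoint_ker_aeval_of_isCoprime g hcop).le_bot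
      ⟨hxq, by simpa [Algebra.algebraMap_eq_smul_one] using hk⟩
    exact hx0 ▸ zero_mem _

end Module.End

section Normed

variable {𝕜 E F α : Type*} [NontriviallyNormedField 𝕜] [CompleteSpace 𝕜]
  [NormedAddCommGroup E] [NormedSpace 𝕜 E] [FiniteDimensional 𝕜 E]
  [NormedAddCommGroup F] [NormedSpace 𝕜 F] {l : Filter α}

namespace LinearMap

theorem eventually_finrank_range_le {A : α → E →ₗ[𝕜] F} {B : E →ₗ[𝕜] F}
    (h : ∀ x, Tendsto (fun a => A a x) l (𝓝 (B x))) :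
    ∀ᶠ a in l, finrank 𝕜 (range B) ≤ finrank 𝕜 (range (A a)) := by
  set b := finBasis 𝕜 (range B)
  choose v hv using fun i => (b i).2
  have hli : LinearIndependent 𝕜 (fun i => B (v i)) := by
    rw [show (fun i => B (v i)) = (range B).subtype ∘ b from funext hv]
    exact b.linearIndependent.map' _ (range B).ker_subtype
  filter_upwards [(tendsto_pi_nhds.2 fun i => h (v i)).eventually hli.eventually] with a ha
  have : LinearIndependent 𝕜 fun i => (⟨A a (v i), mem_range_self _ _⟩ : range (A a)) :=
    .of_comp (range (A a)).subtype ha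
  simpa using this.fintype_card_le_finrank

theorem le_finrank_ker_of_tendsto {A : α → E →ₗ[𝕜] F} {B : E →ₗ[𝕜] F}
    (h : ∀ x, Tendsto (fun a => A a x) l (𝓝 (B x))) {m : ℕ}
    (hm : ∃ᶠ a in l, m ≤ finrank 𝕜 (ker (A a))) : m ≤ finrank 𝕜 (ker B) := by
  obtain ⟨a, hrange, hker⟩ := ((eventually_finrank_range_le h).and_frequently hm).exists
  have := finrank_range_add_finrank_ker B
  have := finrank_range_add_finrank_ker (A a)
  omega

theorem tendsto_toContinuousLinearMap {f : α → E →ₗ[𝕜] F} {g : E →ₗ[𝕜] F}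
    (h : ∀ x, Tendsto (fun a => f a x) l (𝓝 (g x))) :
    Tendsto (fun a => toContinuousLinearMap (f a)) l (𝓝 (toContinuousLinearMap g)) := by
  set b := finBasis 𝕜 E
  let L : (Fin (finrank 𝕜 E) → F) →ₗ[𝕜] E →L[𝕜] F :=
    toContinuousLinearMap.toLinearMap ∘ₗ (b.constr 𝕜).toLinearMap
  have hL : ∀ u : E →ₗ[𝕜] F, toContinuousLinearMap u = L fun i => u (b i) := fun u => by
    simp [L, b.constr_self]
  obtain ⟨C, -, hC⟩ := b.exists_opNorm_le (F := F)
  have hLc : Continuous L := AddMonoidHomClass.continuous_of_bound L C fun w =>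
    hC (norm_nonneg w) fun i => by simpa [L] using norm_le_pi_norm w i
  simp only [hL]
  exact (hLc.tendsto _).comp (tendsto_pi_nhds.2 fun i => h (b i))

end LinearMap

theorem Module.End.HasEigenvalue.norm_le_norm_toContinuousLinearMap {g : End 𝕜 E} {μ : 𝕜}
    (h : g.HasEigenvalue μ) : ‖μ‖ ≤ ‖LinearMap.toContinuousLinearMap g‖ := by
  obtain ⟨x, hx⟩ := h.exists_hasEigenvector
  have hle := (LinearMap.toContinuousLinearMap g).le_opNorm x
  rw [LinearMap.coe_toContinuousLinearMap', hx.apply_eq_smul, norm_smul] at hle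
  exact le_of_mul_le_mul_right hle (norm_pos_iff.2 hx.2)

end Normed

theorem le_finrank_iSup_maxGenEigenspace_of_frequently {V : Type*} [NormedAddCommGroup V]
    [NormedSpace ℂ V] [FiniteDimensional ℂ V] {f : ℕ → End ℂ V} {flim : End ℂ V}
    (hconv : ∀ x, Tendsto (fun k => f k x) atTop (𝓝 (flim x))) {Λ : Set ℂ} (hΛ : IsClosed Λ)
    {m : ℕ} (hm : ∃ᶠ k in atTop,
      finrank ℂ (⨆ μ ∈ Λ, (f k).maxGenEigenspace μ : Submodule ℂ V) = m) :
    m ≤ finrank ℂ (⨆ μ ∈ Λ, flim.maxGenEigenspace μ : Submodule ℂ V) := by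
  have hT := LinearMap.tendsto_toContinuousLinearMap hconv
  obtain ⟨c, hc⟩ := hT.norm.bddAbove_range
  obtain ⟨φ, hφ, hφm⟩ := extraction_of_frequently_atTop hm
  choose r hr hker using fun j =>
    (f (φ j)).exists_iSup_maxGenEigenspace_le_ker_aeval_prod Λ (hφm j)
  have hK : IsCompact (Set.univ.pi fun _ : Fin m => Λ ∩ Metric.closedBall 0 c) :=
    isCompact_univ_pi fun _ => (isCompact_closedBall 0 c).inter_left hΛ
  obtain ⟨r₀, hr₀, ψ, hψ, hlim⟩ := hK.tendsto_subseq fun j i _ =>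
    ⟨(hr j i).2, mem_closedBall_zero_iff.2 ((hr j i).1.norm_le_norm_toContinuousLinearMap.trans
      (hc ⟨φ j, rfl⟩))⟩
  have hA := tendsto_aeval_prod_X_sub_C Finset.univ (hT.comp (hφ.comp hψ).tendsto_atTop) hlim
  have haeval : ∀ (g : End ℂ V) (p : ℂ[X]),
      aeval (LinearMap.toContinuousLinearMap g) p = LinearMap.toContinuousLinearMap (aeval g p) :=
    aeval_algHom_apply (Module.End.toContinuousLinearMap V)
  simp only [Function.comp_apply, haeval] at hA
  have hA' := fun x => ((ContinuousLinearMap.apply ℂ V x).continuous.tendsto _).comp hA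
  simp only [Function.comp_def, ContinuousLinearMap.apply_apply,
    LinearMap.coe_toContinuousLinearMap'] at hA'
  calc m ≤ finrank ℂ (LinearMap.ker (aeval flim (∏ i, (X - C (r₀ i))))) :=
        LinearMap.le_finrank_ker_of_tendsto hA' (Frequently.of_forall fun j =>
          (hφm (ψ j)).symm.le.trans (Submodule.finrank_mono (hker (ψ j))))
    _ ≤ _ := Submodule.finrank_mono <| flim.ker_aeval_le_iSup_maxGenEigenspace Λ fun μ hμ => by
        obtain ⟨i, -, rfl⟩ := exists_eq_of_isRoot_prod_X_sub_C hμ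
        exact (hr₀ i (Set.mem_univ i)).1

/-- Upper semicontinuity of generalized-eigenspace multiplicity: if endomorphisms `f k` of a
finite-dimensional complex vector space converge to `f`, and `Λ ⊆ ℂ` is closed, then
`dim E(f,Λ) ≥ limsup_k dim E(f k, Λ)`, where `E(g,Λ)` is the sum of the generalized
eigenspaces of `g` for eigenvalues in `Λ`. -/
theorem stmt9 (V : Type*) [NormedAddCommGroup V] [NormedSpace ℂ V] [FiniteDimensional ℂ V]
    (f : ℕ → V →ₗ[ℂ] V) (flim : V →ₗ[ℂ] V)
    (hconv : ∀ x : V, Tendsto (fun k => f k x) atTop (nhds (flim x)))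
    (Λ : Set ℂ) (hΛ : IsClosed Λ) :
    Filter.limsup
        (fun k => Module.finrank ℂ
          (⨆ μ ∈ Λ, Module.End.maxGenEigenspace (f k) μ : Submodule ℂ V)) atTop
      ≤ Module.finrank ℂ (⨆ μ ∈ Λ, Module.End.maxGenEigenspace flim μ : Submodule ℂ V) := by
  set d := fun k => finrank ℂ (⨆ μ ∈ Λ, End.maxGenEigenspace (f k) μ : Submodule ℂ V)
  refine limsup_le_of_le (by isBoundedDefault) ?_
  by_contra h
  rw [not_eventually] at h
  have hfreq : ∃ᶠ k in atTop, ∃ m ∈ Finset.range (finrank ℂ V + 1),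
      ¬ m ≤ finrank ℂ (⨆ μ ∈ Λ, End.maxGenEigenspace flim μ : Submodule ℂ V) ∧ d k = m :=
    h.mono fun k hk => ⟨d k, Finset.mem_range_succ_iff.2 (Submodule.finrank_le _), hk, rfl⟩
  obtain ⟨m, -, hm⟩ := (Finset.frequently_exists _).1 hfreq
  exact hm.exists.elim fun _ hk => hk.1 <|
    le_finrank_iSup_maxGenEigenspace_of_frequently hconv hΛ (hm.mono fun _ => And.right)
end

section
/- Let l ≥ 2 and let Δ ∈ ℤ[x,x⁻¹,y,y⁻¹] be a Laurent polynomial of the form Δ = ε·y^a + f_1(y)·x + f_2(y)·x² + ⋯ + f_{l−2}(y)·x^{l−2} + x^{l−1}, where ε ∈ {1,−1}, a ∈ ℤ, and f_i ∈ ℤ[y,y⁻¹]. Suppose moreover there exist ε' ∈ {1,−1}, δ ∈ {1,−1}, b, c, d ∈ ℤ, and g_i ∈ ℤ[x,x⁻¹] such that δ·x^c·y^d·Δ = ε'·x^b + g_1(x)·y + ⋯ + g_{l−2}(x)·y^{l−2} + y^{l−1}. Then the Laurent polynomial (x−1)(y−1)Δ has strictly more than 4 nonzero monomials. -/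
/-!
In the first form, the extreme columns `x⁰` and `x^(l-1)` of `Δ` are the single monomials
`ε·y^a` and `y⁰`, so `(x-1)(y-1)Δ` has the nonzero coefficients `ε, -ε` at `(0, a), (0, a+1)`
and `-1, 1` at `(l, 0), (l, 1)`. In the second form, the top row `y^(l-1)` of `δ·x^c·y^d·Δ` is
the single monomial `x⁰`, so `(x-1)(y-1)Δ` also has nonzero coefficients at the horizontally
adjacent points `(-c, l-d)` and `(1-c, l-d)`. As the columns `0` and `l` are at distance `l ≥ 2`,
these two points cannot both be among the first four.
-/

noncomputable section

/-- The ring `ℤ[x,x⁻¹,y,y⁻¹]` of Laurent polynomials in two variables, as the monoid algebra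
of `ℤ × ℤ` over `ℤ`.  The monomial `x^c · y^d` is `single (c, d) 1`. -/
abbrev Laurent2 := AddMonoidAlgebra ℤ (ℤ × ℤ)

/-- The monomial `r · x^c · y^d` in `ℤ[x,x⁻¹,y,y⁻¹]`. -/
def mono (c d r : ℤ) : Laurent2 := AddMonoidAlgebra.single (c, d) r

theorem AddMonoidAlgebra.coeff_sum_mul_single_of_notMem {R G ι : Type*} [Semiring R]
    [AddGroup G] (s : Finset ι) (H : ι → AddMonoidAlgebra R G) (k : ι → G) (p : G)
    (h : ∀ i ∈ s, p - k i ∉ (H i).coeff.support) :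
    (∑ i ∈ s, H i * single (k i) 1).coeff p = 0 := by
  rw [coeff_sum, Finsupp.finsetSum_apply]
  refine Finset.sum_eq_zero fun i hi => ?_
  rw [coeff_mul_single_apply, mul_one, ← sub_eq_add_neg]
  exact Finsupp.notMem_support_iff.1 (h i hi)

namespace Laurent2

lemma coeff_mono (c d r u v : ℤ) :
    (mono c d r).coeff (u, v) = if c = u ∧ d = v then r else 0 := by
  simp [mono, Finsupp.single_apply]

lemma coeff_mono_mul (c d r : ℤ) (W : Laurent2) (u v : ℤ) :
    (mono c d r * W).coeff (u, v) = r * W.coeff (u - c, v - d) := by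
  rw [mono, AddMonoidAlgebra.coeff_single_mul_apply, neg_add_eq_sub, Prod.mk_sub_mk]

lemma coeff_sum_Icc_mul_mono_fst_eq_zero (n : ℕ) (H : ℕ → Laurent2)
    (hH : ∀ i, ∀ p ∈ (H i).coeff.support, p.1 = 0) (u v : ℤ) (hu : u ≤ 0 ∨ (n : ℤ) < u) :
    (∑ i ∈ Finset.Icc 1 n, H i * mono (i : ℤ) 0 1).coeff (u, v) = 0 := by
  refine AddMonoidAlgebra.coeff_sum_mul_single_of_notMem _ H (fun i => ((i : ℤ), 0)) _
    fun i hi hmem => ?_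
  have hzero := hH i _ hmem
  simp only [Finset.mem_Icc, Prod.mk_sub_mk] at hi hzero
  omega

lemma coeff_sum_Icc_mul_mono_snd_eq_zero (n : ℕ) (H : ℕ → Laurent2)
    (hH : ∀ i, ∀ p ∈ (H i).coeff.support, p.2 = 0) (u v : ℤ) (hv : v ≤ 0 ∨ (n : ℤ) < v) :
    (∑ i ∈ Finset.Icc 1 n, H i * mono 0 (i : ℤ) 1).coeff (u, v) = 0 := by
  refine AddMonoidAlgebra.coeff_sum_mul_single_of_notMem _ H (fun i => (0, (i : ℤ))) _
    fun i hi hmem => ?_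
  have hzero := hH i _ hmem
  simp only [Finset.mem_Icc, Prod.mk_sub_mk] at hi hzero
  omega

lemma coeff_sub_one_mul_sub_one_mul (W : Laurent2) (u v : ℤ) :
    ((mono 1 0 1 - 1) * (mono 0 1 1 - 1) * W).coeff (u, v) =
      (W.coeff (u, v) - W.coeff (u - 1, v)) - (W.coeff (u, v - 1) - W.coeff (u - 1, v - 1)) := by
  have hxy : mono 1 0 1 * mono 0 1 1 = mono 1 1 1 := by
    simp [mono, AddMonoidAlgebra.single_mul_single]
  have hexpand : (mono 1 0 1 - 1) * (mono 0 1 1 - 1) * W =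
      mono 1 1 1 * W - mono 1 0 1 * W - mono 0 1 1 * W + W := by
    rw [← hxy]; ring
  simp only [hexpand, AddMonoidAlgebra.coeff_add, AddMonoidAlgebra.coeff_sub, Finsupp.add_apply,
    Finsupp.sub_apply, coeff_mono_mul, one_mul, sub_zero]
  ring

lemma coeff_sub_one_mul_sub_one_mul_of_column (W : Laurent2) (u v₀ r : ℤ)
    (h : ∀ v, W.coeff (u, v) - W.coeff (u - 1, v) = if v = v₀ then r else 0) :
    ((mono 1 0 1 - 1) * (mono 0 1 1 - 1) * W).coeff (u, v₀) = r ∧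
      ((mono 1 0 1 - 1) * (mono 0 1 1 - 1) * W).coeff (u, v₀ + 1) = -r := by
  simp only [coeff_sub_one_mul_sub_one_mul, h]
  constructor <;> split_ifs <;> omega

lemma coeff_sub_one_mul_sub_one_mul_of_row (W : Laurent2) (u₀ v r : ℤ)
    (h : ∀ u, W.coeff (u, v) - W.coeff (u, v - 1) = if u = u₀ then r else 0) :
    ((mono 1 0 1 - 1) * (mono 0 1 1 - 1) * W).coeff (u₀, v) = r ∧
      ((mono 1 0 1 - 1) * (mono 0 1 1 - 1) * W).coeff (u₀ + 1, v) = -r := by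
  have hrow (u) : ((mono 1 0 1 - 1) * (mono 0 1 1 - 1) * W).coeff (u, v) =
      (W.coeff (u, v) - W.coeff (u, v - 1)) - (W.coeff (u - 1, v) - W.coeff (u - 1, v - 1)) := by
    rw [coeff_sub_one_mul_sub_one_mul]; ring
  simp only [hrow, h]
  constructor <;> split_ifs <;> omega

lemma four_lt_card_of_subset {s : Finset (ℤ × ℤ)} {l : ℤ} (hl : 2 ≤ l) (a u v : ℤ)
    (h : {(0, a), (0, a + 1), (l, 0), (l, 1), (u, v), (u + 1, v)} ⊆ s) : 4 < s.card := by
  set S : Finset (ℤ × ℤ) := {(0, a), (0, a + 1), (l, 0), (l, 1)}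
  have hS : S.card = 4 :=
    Finset.card_eq_four.2
      ⟨_, _, _, _, by grind, by grind, by grind, by grind, by grind, by grind, rfl⟩
  obtain ⟨p, hpS, hps⟩ : ∃ p ∉ S, p ∈ s := by
    by_cases hu : (u, v) ∈ S
    · refine ⟨(u + 1, v), ?_, h (by simp)⟩
      simp only [S, Finset.mem_insert, Finset.mem_singleton, Prod.ext_iff] at hu ⊢
      omega
    · exact ⟨(u, v), hu, h (by simp)⟩
  calc 4 = S.card := hS.symm
    _ < (insert p S).card := by rw [Finset.card_insert_of_notMem hpS]; omega
    _ ≤ s.card := Finset.card_le_card (Finset.insert_subset hps (fun q hq => h (by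
        simp only [S, Finset.mem_insert, Finset.mem_singleton] at hq ⊢; tauto)))

end Laurent2

open Laurent2

theorem stmt14_general (l : ℕ) (hl : 2 ≤ l) (ε ε' δ : ℤ)
    (hε : ε = 1 ∨ ε = -1)
    (a b c d : ℤ) (F G : ℕ → Laurent2)
    (hF : ∀ (i : ℕ), ∀ p ∈ (F i).coeff.support, p.1 = 0)
    (hG : ∀ (i : ℕ), ∀ p ∈ (G i).coeff.support, p.2 = 0)
    (Δ : Laurent2)
    (hΔ : Δ = mono 0 a ε + (∑ i ∈ Finset.Icc 1 (l - 2), F i * mono (i : ℤ) 0 1) +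
      mono ((l : ℤ) - 1) 0 1)
    (hΔ' : mono c d δ * Δ = mono b 0 ε' +
      (∑ i ∈ Finset.Icc 1 (l - 2), G i * mono 0 (i : ℤ) 1) + mono 0 ((l : ℤ) - 1) 1) :
    4 < (((mono 1 0 1 - 1) * (mono 0 1 1 - 1) * Δ).coeff.support).card := by
  have hΔcoeff (u v : ℤ) (hu : u ≤ 0 ∨ (l : ℤ) - 1 ≤ u) : Δ.coeff (u, v) =
      (if 0 = u ∧ a = v then ε else 0) + if (l : ℤ) - 1 = u ∧ 0 = v then 1 else 0 := by
    rw [hΔ]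
    simp only [AddMonoidAlgebra.coeff_add, Finsupp.add_apply, coeff_mono,
      coeff_sum_Icc_mul_mono_fst_eq_zero (l - 2) F hF u v (by omega), add_zero]
  have hΔ'coeff (u v : ℤ) (hv : (l : ℤ) - 1 ≤ v) :
      (mono c d δ * Δ).coeff (u, v) = if 0 = u ∧ (l : ℤ) - 1 = v then 1 else 0 := by
    rw [hΔ']
    simp only [AddMonoidAlgebra.coeff_add, Finsupp.add_apply, coeff_mono,
      coeff_sum_Icc_mul_mono_snd_eq_zero (l - 2) G hG u v (by omega), add_zero]
    rw [if_neg (by omega), zero_add]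
  obtain ⟨hP₁, hP₂⟩ := coeff_sub_one_mul_sub_one_mul_of_column Δ 0 a ε fun v => by
    rw [hΔcoeff _ _ (by omega), hΔcoeff _ _ (by omega)]
    split_ifs <;> omega
  obtain ⟨hP₃, hP₄⟩ := coeff_sub_one_mul_sub_one_mul_of_column Δ l 0 (-1) fun v => by
    rw [hΔcoeff _ _ (by omega), hΔcoeff _ _ (by omega)]
    split_ifs <;> omega
  obtain ⟨hQ₁, hQ₂⟩ := coeff_sub_one_mul_sub_one_mul_of_row (mono c d δ * Δ) 0 l (-1) fun u => by
    rw [hΔ'coeff _ _ (by omega), hΔ'coeff _ _ (by omega)]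
    split_ifs <;> omega
  rw [mul_left_comm, coeff_mono_mul] at hQ₁ hQ₂
  simp only [zero_sub, zero_add, neg_neg] at hP₄ hQ₁ hQ₂
  have hε0 : ε ≠ 0 := by omega
  refine four_lt_card_of_subset (by omega : (2 : ℤ) ≤ l) a (-c) (l - d) ?_
  simp only [Finset.insert_subset_iff, Finset.singleton_subset_iff, Finsupp.mem_support_iff,
    neg_add_eq_sub]
  refine ⟨by rw [hP₁]; exact hε0, by rw [hP₂]; exact neg_ne_zero.2 hε0, by rw [hP₃]; norm_num,
    by rw [hP₄]; norm_num, fun h => ?_, fun h => ?_⟩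
  · simp [h] at hQ₁
  · simp [h] at hQ₂

/-- If `Δ ∈ ℤ[x,x⁻¹,y,y⁻¹]` has the form
`Δ = ε·y^a + f_1(y)·x + ⋯ + f_{l-2}(y)·x^{l-2} + x^{l-1}` with `ε = ±1`, and some unit
monomial multiple `δ·x^c·y^d·Δ` has the symmetric form
`ε'·x^b + g_1(x)·y + ⋯ + g_{l-2}(x)·y^{l-2} + y^{l-1}` with `ε' = ±1`, where `l ≥ 2`,
then `(x-1)(y-1)Δ` has strictly more than 4 nonzero monomials. -/
theorem stmt14 (l : ℕ) (hl : 2 ≤ l) (ε ε' δ : ℤ)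
    (hε : ε = 1 ∨ ε = -1) (hε' : ε' = 1 ∨ ε' = -1) (hδ : δ = 1 ∨ δ = -1)
    (a b c d : ℤ) (F G : ℕ → Laurent2)
    (hF : ∀ (i : ℕ), ∀ p ∈ (F i).coeff.support, p.1 = 0)
    (hG : ∀ (i : ℕ), ∀ p ∈ (G i).coeff.support, p.2 = 0)
    (Δ : Laurent2)
    (hΔ : Δ = mono 0 a ε + (∑ i ∈ Finset.Icc 1 (l - 2), F i * mono (i : ℤ) 0 1) +
      mono ((l : ℤ) - 1) 0 1)
    (hΔ' : mono c d δ * Δ = mono b 0 ε' +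
      (∑ i ∈ Finset.Icc 1 (l - 2), G i * mono 0 (i : ℤ) 1) + mono 0 ((l : ℤ) - 1) 1) :
    4 < (((mono 1 0 1 - 1) * (mono 0 1 1 - 1) * Δ).coeff.support).card :=
  stmt14_general l hl ε ε' δ hε a b c d F G hF hG Δ hΔ hΔ'

end
end

section
/- Let m ≥ 1 and let G be the group presented by generators g_1, …, g_m with relations [g_i, g_{i+1}] = 1 for i = 1, …, m−1. Let C ⊆ {g_1,…,g_m, g_1⁻¹,…,g_m⁻¹} be closed under inverses, and let G_C be the subgroup of G generated by C. If (x_1,…,x_N) is a reduced word (i.e., for every pair u < v with x_u·x_v = 1, there exists w with u < w < v such that x_w does not commute with x_u in G), then x_1⋯x_N ∈ G_C if and only if every letter x_i lies in C. -/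
/-- The set of letters: the generators of `PathGroup m` and their inverses. -/
def pathLetters (m : ℕ) : Set (PathGroup m) :=
  {x | ∃ i : Fin m, x = pathGen m i ∨ x = (pathGen m i)⁻¹}

/-!
Reduced words are normal forms in a right-angled Artin group. Following van der Waerden, the group
acts on swap-classes of reduced words, a letter acting by cancelling its inverse when that inverse
can be swapped to the front and by prepending itself otherwise; evaluating at the empty word shows
that two reduced words representing the same element differ only by swaps of adjacent commuting
letters. Since every word can be reduced without getting longer, a reduced word is a shortest
representative of its element.

If `x_1 ⋯ x_N` lies in `G_C`, it is fixed by the retraction of `G` killing the generators not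
occurring in `C`. That retraction maps the word to the word with the letters outside `C` deleted,
which therefore represents the same element; by minimality nothing was deleted.
-/

structure Letter (ι : Type*) where
  gen : ι
  pos : Bool

namespace Letter

variable {ι : Type*}

instance : InvolutiveInv (Letter ι) where
  inv a := ⟨a.gen, !a.pos⟩
  inv_inv a := by simp

@[simp] lemma mk_inv (i : ι) (b : Bool) : (⟨i, b⟩ : Letter ι)⁻¹ = ⟨i, !b⟩ := rfl

@[simp] lemma inv_gen (a : Letter ι) : a⁻¹.gen = a.gen := rfl

lemma eq_or_eq_inv_of_gen_eq {a b : Letter ι} (h : a.gen = b.gen) : b = a ∨ b = a⁻¹ := by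
  rcases a with ⟨i, _ | _⟩ <;> rcases b with ⟨j, _ | _⟩ <;> simp_all

variable {G : Type*} [Group G] (f : ι → G)

def eval (a : Letter ι) : G := cond a.pos (f a.gen) (f a.gen)⁻¹

@[simp] lemma eval_inv (a : Letter ι) : a⁻¹.eval f = (a.eval f)⁻¹ := by
  rcases a with ⟨i, _ | _⟩ <;> simp [eval]

variable {f}

lemma eval_commute {a b : Letter ι} (h : Commute (f a.gen) (f b.gen)) :
    Commute (a.eval f) (b.eval f) := by
  rcases a with ⟨i, _ | _⟩ <;> rcases b with ⟨j, _ | _⟩ <;> simpa [eval] using h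

lemma eval_mem {H : Set G} (hH : ∀ x ∈ H, x⁻¹ ∈ H) {a : Letter ι} (ha : f a.gen ∈ H) :
    a.eval f ∈ H := by
  rcases a with ⟨i, _ | _⟩
  · exact hH _ ha
  · exact ha

end Letter

section WordEval

variable {ι G H : Type*} [Group G] [Group H] (f : ι → G)

def wordEval (w : List (Letter ι)) : G := (w.map (Letter.eval f)).prod

@[simp] lemma wordEval_nil : wordEval f [] = 1 := rfl

@[simp] lemma wordEval_cons (a : Letter ι) (w : List (Letter ι)) :
    wordEval f (a :: w) = a.eval f * wordEval f w := by
  simp [wordEval]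

@[simp] lemma wordEval_append (u v : List (Letter ι)) :
    wordEval f (u ++ v) = wordEval f u * wordEval f v := by
  simp [wordEval]

lemma map_wordEval (φ : G →* H) (w : List (Letter ι)) :
    φ (wordEval f w) = wordEval (φ ∘ f) w := by
  induction w with
  | nil => simp
  | cons a w ih => rcases a with ⟨i, _ | _⟩ <;> simp [ih, Letter.eval]

lemma wordEval_ite_one (S : Set ι) [DecidablePred (· ∈ S)] (w : List (Letter ι)) :
    wordEval (fun i => if i ∈ S then f i else 1) w =
      wordEval f (w.filter fun a => a.gen ∈ S) := by
  induction w with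
  | nil => rfl
  | cons a w ih =>
    by_cases ha : a.gen ∈ S <;> rcases a with ⟨i, _ | _⟩ <;> simp_all [Letter.eval]

variable {f}

lemma wordEval_append_cons_append_inv_cons {p q s : List (Letter ι)} {a : Letter ι}
    (hq : ∀ z ∈ q, Commute (a.eval f) (z.eval f)) :
    wordEval f (p ++ a :: (q ++ a⁻¹ :: s)) = wordEval f (p ++ q ++ s) := by
  have hc : Commute (a.eval f) (wordEval f q) :=
    Commute.list_prod_right _ _ (by simpa using hq)
  simp only [wordEval_append, wordEval_cons, Letter.eval_inv, mul_assoc]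
  rw [← mul_assoc (a.eval f), hc.eq, mul_assoc, mul_inv_cancel_left]

end WordEval

section SwapEquiv

variable {ι : Type*} (R : ι → ι → Prop)

inductive SwapEquiv : List (Letter ι) → List (Letter ι) → Prop
  | nil : SwapEquiv [] []
  | cons (a : Letter ι) {u v : List (Letter ι)} : SwapEquiv u v → SwapEquiv (a :: u) (a :: v)
  | swap {a b : Letter ι} (hab : R a.gen b.gen) {u v : List (Letter ι)} :
      SwapEquiv u v → SwapEquiv (a :: b :: u) (b :: a :: v)
  | trans {u v w : List (Letter ι)} : SwapEquiv u v → SwapEquiv v w → SwapEquiv u w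

variable {R}

namespace SwapEquiv

lemma refl : ∀ w : List (Letter ι), SwapEquiv R w w
  | [] => nil
  | a :: w => (refl w).cons a

lemma length_eq {u v : List (Letter ι)} (h : SwapEquiv R u v) : u.length = v.length := by
  induction h with
  | nil => rfl
  | cons _ _ ih => simp [ih]
  | swap _ _ ih => simp [ih]
  | trans _ _ ih₁ ih₂ => exact ih₁.trans ih₂

end SwapEquiv

lemma swapEquiv_append_cons {p : List (Letter ι)} {a : Letter ι} (s : List (Letter ι))
    (hp : ∀ z ∈ p, R z.gen a.gen) : SwapEquiv R (p ++ a :: s) (a :: (p ++ s)) := by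
  induction p with
  | nil => exact .refl _
  | cons c p ih =>
    have hp' := List.forall_mem_cons.1 hp
    exact ((ih hp'.2).cons c).trans (.swap hp'.1 (.refl _))

variable [Std.Symm R]

namespace SwapEquiv

lemma symm {u v : List (Letter ι)} (h : SwapEquiv R u v) : SwapEquiv R v u := by
  induction h with
  | nil => exact nil
  | cons a _ ih => exact ih.cons a
  | swap hab _ ih => exact ih.swap (_root_.symm hab)
  | trans _ _ ih₁ ih₂ => exact ih₂.trans ih₁

lemma exists_eq_append_cons {u v : List (Letter ι)} (h : SwapEquiv R u v) {a : Letter ι} :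
    ∀ {p s : List (Letter ι)}, u = p ++ a :: s → (∀ z ∈ p, R z.gen a.gen) →
      ∃ q r, v = q ++ a :: r ∧ (∀ z ∈ q, R z.gen a.gen) ∧
        SwapEquiv R (p ++ s) (q ++ r) := by
  induction h with
  | nil => simp
  | @cons c u v huv ih =>
    rintro (_ | ⟨d, p⟩) s hu hp <;> simp only [List.nil_append, List.cons_append,
      List.cons.injEq] at hu
    · obtain ⟨rfl, rfl⟩ := hu
      exact ⟨[], v, rfl, by simp, huv⟩
    · obtain ⟨rfl, hu⟩ := hu
      have hp' := List.forall_mem_cons.1 hp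
      obtain ⟨q, r, rfl, hq, hpq⟩ := ih hu hp'.2
      exact ⟨c :: q, r, rfl, List.forall_mem_cons.2 ⟨hp'.1, hq⟩, hpq.cons c⟩
  | @swap b c hbc u v huv ih =>
    rintro (_ | ⟨d, _ | ⟨e, p⟩⟩) s hu hp <;> simp only [List.nil_append, List.cons_append,
      List.cons.injEq] at hu
    · obtain ⟨rfl, rfl⟩ := hu
      exact ⟨[c], v, rfl, by simpa using _root_.symm hbc, huv.cons c⟩
    · obtain ⟨rfl, rfl, rfl⟩ := hu
      exact ⟨[], b :: v, rfl, by simp, huv.cons b⟩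
    · obtain ⟨rfl, rfl, hu⟩ := hu
      simp only [List.forall_mem_cons] at hp
      obtain ⟨q, r, rfl, hq, hpq⟩ := ih hu hp.2.2
      refine ⟨c :: b :: q, r, rfl, ?_, hpq.swap hbc⟩
      simp only [List.forall_mem_cons]
      exact ⟨hp.2.1, hp.1, hq⟩
  | trans _ _ ih₁ ih₂ =>
    intro p s hu hp
    obtain ⟨q, r, rfl, hq, hpq⟩ := ih₁ hu hp
    obtain ⟨q', r', rfl, hq', hqq'⟩ := ih₂ rfl hq
    exact ⟨q', r', rfl, hq', hpq.trans hqq'⟩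

lemma of_cons {a : Letter ι} {u v : List (Letter ι)} (h : SwapEquiv R (a :: u) (a :: v)) :
    SwapEquiv R u v := by
  obtain ⟨_ | ⟨c, q⟩, r, hv, hq, huv⟩ := h.exists_eq_append_cons (p := []) rfl (by simp) <;>
    simp only [List.nil_append, List.cons_append, List.cons.injEq] at hv huv
  · exact hv.2 ▸ huv
  · obtain ⟨rfl, rfl⟩ := hv
    exact huv.trans (swapEquiv_append_cons r (List.forall_mem_cons.1 hq).2).symm

lemma cons_cons_of_ne {a b : Letter ι} (hab : a ≠ b) {u v : List (Letter ι)}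
    (h : SwapEquiv R (a :: u) (b :: v)) :
    ∃ w, SwapEquiv R u (b :: w) ∧ SwapEquiv R v (a :: w) := by
  obtain ⟨_ | ⟨c, q⟩, r, hv, hq, huv⟩ := h.exists_eq_append_cons (p := []) rfl (by simp) <;>
    simp only [List.nil_append, List.cons_append, List.cons.injEq] at hv huv
  · exact absurd hv.1.symm hab
  · obtain ⟨rfl, rfl⟩ := hv
    exact ⟨q ++ r, huv, swapEquiv_append_cons r (List.forall_mem_cons.1 hq).2⟩

end SwapEquiv

lemma not_exists_swapEquiv_cons_cons_of_ne {a b : Letter ι} (hab : a ≠ b) {w : List (Letter ι)}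
    (h : ¬ ∃ t, SwapEquiv R w (b :: t)) : ¬ ∃ t, SwapEquiv R (a :: w) (b :: t) :=
  fun ⟨_, ht⟩ => h ((ht.cons_cons_of_ne hab).imp fun _ h => h.1)

lemma exists_swapEquiv_cons_iff {a : Letter ι} {w : List (Letter ι)} :
    (∃ t, SwapEquiv R w (a :: t)) ↔
      ∃ p s, w = p ++ a :: s ∧ ∀ z ∈ p, R z.gen a.gen := by
  constructor
  · rintro ⟨t, h⟩
    obtain ⟨q, r, hw, hq, -⟩ := h.symm.exists_eq_append_cons (p := []) rfl (by simp)
    exact ⟨q, r, hw, hq⟩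
  · rintro ⟨p, s, rfl, hp⟩
    exact ⟨p ++ s, swapEquiv_append_cons s hp⟩

end SwapEquiv

section Reduced

variable {ι : Type*} (R : ι → ι → Prop)

def Reduced (w : List (Letter ι)) : Prop :=
  ∀ p a q s, w = p ++ a :: (q ++ a⁻¹ :: s) → ∃ z ∈ q, ¬ R z.gen a.gen

variable {R}

lemma reduced_nil : Reduced R [] := by
  intro p a q s h
  simp at h

lemma Reduced.of_cons {a : Letter ι} {w : List (Letter ι)} (h : Reduced R (a :: w)) :
    Reduced R w :=
  fun p b q s hw => h (a :: p) b q s (by simp [hw])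

lemma not_reduced_cons_inv_cons (a : Letter ι) (w : List (Letter ι)) :
    ¬ Reduced R (a :: a⁻¹ :: w) := by
  intro h
  obtain ⟨z, hz, -⟩ := h [] a [] w rfl
  simp at hz

lemma reduced_ofFn {N : ℕ} (ℓ : Fin N → Letter ι)
    (h : ∀ u v : Fin N, u < v → ℓ v = (ℓ u)⁻¹ →
      ∃ t, u < t ∧ t < v ∧ ¬ R (ℓ t).gen (ℓ u).gen) :
    Reduced R (List.ofFn ℓ) := by
  intro p a q s hw
  have hN : N = p.length + (q.length + (s.length + 1) + 1) := by
    simpa using congrArg List.length hw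
  have hℓ : ∀ k (hk : k < N),
      ℓ ⟨k, hk⟩ = (p ++ a :: (q ++ a⁻¹ :: s))[k]'(by simp; omega) := by
    intro k hk
    simp only [← hw, List.getElem_ofFn]
  obtain ⟨⟨t, ht⟩, hut, htv, hnc⟩ :=
    h ⟨p.length, by omega⟩ ⟨p.length + (q.length + 1), by omega⟩
    (Fin.mk_lt_mk.2 (by omega)) (by rw [hℓ, hℓ]; simp)
  rw [Fin.mk_lt_mk] at hut htv
  obtain ⟨k, rfl⟩ : ∃ k, t = p.length + (k + 1) := ⟨t - p.length - 1, by omega⟩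
  have hkq : k < q.length := by omega
  refine ⟨q[k], List.getElem_mem hkq, ?_⟩
  rw [hℓ, hℓ] at hnc
  simpa [List.getElem_append_left hkq] using hnc

lemma exists_reduced_wordEval_eq {G : Type*} [Group G] {f : ι → G}
    (hf : ∀ i j, R i j → Commute (f i) (f j)) (w : List (Letter ι)) :
    ∃ v, Reduced R v ∧ wordEval f v = wordEval f w ∧ v.length ≤ w.length := by
  by_cases hw : Reduced R w
  · exact ⟨w, hw, rfl, le_rfl⟩
  obtain ⟨p, a, q, s, hpqs, hq⟩ :
      ∃ p a q s, w = p ++ a :: (q ++ a⁻¹ :: s) ∧ ∀ z ∈ q, R z.gen a.gen := by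
    simpa [Reduced] using hw
  obtain ⟨v, hv, hvw, hlen⟩ := exists_reduced_wordEval_eq hf (p ++ q ++ s)
  subst hpqs
  refine ⟨v, hv, hvw.trans ?_, by simp at hlen ⊢; omega⟩
  exact (wordEval_append_cons_append_inv_cons fun z hz =>
    (Letter.eval_commute (hf _ _ (hq z hz))).symm).symm
termination_by w.length
decreasing_by simp [hpqs]

variable [Std.Symm R]

lemma reduced_cons_iff {a : Letter ι} {w : List (Letter ι)} :
    Reduced R (a :: w) ↔ Reduced R w ∧ ¬ ∃ t, SwapEquiv R w (a⁻¹ :: t) := by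
  rw [exists_swapEquiv_cons_iff]
  constructor
  · intro h
    refine ⟨h.of_cons, ?_⟩
    rintro ⟨p, s, rfl, hp⟩
    obtain ⟨z, hz, hnc⟩ := h [] a p s rfl
    exact hnc (hp z hz)
  · rintro ⟨hw, hnc⟩ (_ | ⟨c, p⟩) b q s h <;>
      simp only [List.nil_append, List.cons_append, List.cons.injEq] at h
    · obtain ⟨rfl, rfl⟩ := h
      by_contra! hq
      exact hnc ⟨q, s, rfl, hq⟩
    · exact hw p b q s h.2

lemma SwapEquiv.reduced {u v : List (Letter ι)} (h : SwapEquiv R u v) (hu : Reduced R u) :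
    Reduced R v := by
  induction h with
  | nil => exact hu
  | cons a huv ih =>
    rw [reduced_cons_iff] at hu ⊢
    exact ⟨ih hu.1, fun ⟨t, ht⟩ => hu.2 ⟨t, huv.trans ht⟩⟩
  | @swap a b hab u v huv ih =>
    obtain ⟨hbu, hau⟩ := reduced_cons_iff.1 hu
    obtain ⟨hu, hbu'⟩ := reduced_cons_iff.1 hbu
    refine reduced_cons_iff.2 ⟨reduced_cons_iff.2 ⟨ih hu, ?_⟩, ?_⟩
    · rintro ⟨t, ht⟩
      exact hau ⟨b :: t, ((huv.trans ht).cons b).trans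
        (.swap (a := b) (b := a⁻¹) (_root_.symm hab) (.refl t))⟩
    · rintro ⟨t, ht⟩
      by_cases hab' : a = b⁻¹
      · subst hab'
        exact hau ⟨u, by rw [inv_inv]; exact .refl _⟩
      · exact not_exists_swapEquiv_cons_cons_of_ne hab'
          (fun ⟨t', ht'⟩ => hbu' ⟨t', huv.trans ht'⟩) ⟨t, ht⟩
  | trans _ _ ih₁ ih₂ => exact ih₂ (ih₁ hu)

end Reduced

section NormalForm

variable {ι : Type*} (R : ι → ι → Prop)

abbrev ReducedWord := {w : List (Letter ι) // Reduced R w}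

variable [Std.Symm R]

instance ReducedWord.setoid : Setoid (ReducedWord R) where
  r u v := SwapEquiv R u.1 v.1
  iseqv := ⟨fun u => .refl u.1, SwapEquiv.symm, SwapEquiv.trans⟩

abbrev NormalForm := Quotient (ReducedWord.setoid R)

def NormalForm.nil : NormalForm R := ⟦⟨[], reduced_nil⟩⟧

open Classical in
noncomputable def ReducedWord.cons (a : Letter ι) (w : ReducedWord R) : NormalForm R :=
  if h : ∃ t, SwapEquiv R w.1 (a⁻¹ :: t) then
    ⟦⟨h.choose, (h.choose_spec.reduced w.2).of_cons⟩⟧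
  else ⟦⟨a :: w.1, reduced_cons_iff.2 ⟨w.2, h⟩⟩⟧

variable {R}

lemma ReducedWord.cons_of_swapEquiv {a : Letter ι} {w : ReducedWord R} {t : List (Letter ι)}
    (ht : Reduced R t) (h : SwapEquiv R w.1 (a⁻¹ :: t)) : w.cons R a = ⟦⟨t, ht⟩⟧ := by
  have hex : ∃ t, SwapEquiv R w.1 (a⁻¹ :: t) := ⟨t, h⟩
  rw [ReducedWord.cons, dif_pos hex]
  exact Quotient.sound (hex.choose_spec.symm.trans h).of_cons

lemma ReducedWord.cons_of_not_exists {a : Letter ι} {w : ReducedWord R}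
    (h : ¬ ∃ t, SwapEquiv R w.1 (a⁻¹ :: t)) :
    w.cons R a = ⟦⟨a :: w.1, reduced_cons_iff.2 ⟨w.2, h⟩⟩⟧ := by
  rw [ReducedWord.cons, dif_neg h]

variable (R) in
noncomputable def NormalForm.cons (a : Letter ι) : NormalForm R → NormalForm R :=
  Quotient.lift (ReducedWord.cons R a) fun u v (huv : SwapEquiv R u.1 v.1) => by
    by_cases h : ∃ t, SwapEquiv R u.1 (a⁻¹ :: t)
    · obtain ⟨t, ht⟩ := h
      have htr := (ht.reduced u.2).of_cons
      rw [ReducedWord.cons_of_swapEquiv htr ht,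
        ReducedWord.cons_of_swapEquiv htr (huv.symm.trans ht)]
    · rw [ReducedWord.cons_of_not_exists h,
        ReducedWord.cons_of_not_exists fun ⟨t, ht⟩ => h ⟨t, huv.trans ht⟩]
      exact Quotient.sound (huv.cons a)

namespace NormalForm

lemma cons_mk_of_swapEquiv {a : Letter ι} {w : ReducedWord R} {t : List (Letter ι)}
    (ht : Reduced R t) (h : SwapEquiv R w.1 (a⁻¹ :: t)) : cons R a ⟦w⟧ = ⟦⟨t, ht⟩⟧ :=
  ReducedWord.cons_of_swapEquiv ht h

lemma cons_mk_of_not_exists {a : Letter ι} {w : ReducedWord R}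
    (h : ¬ ∃ t, SwapEquiv R w.1 (a⁻¹ :: t)) :
    cons R a ⟦w⟧ = ⟦⟨a :: w.1, reduced_cons_iff.2 ⟨w.2, h⟩⟩⟧ :=
  ReducedWord.cons_of_not_exists h

lemma cons_cons_inv (a : Letter ι) (x : NormalForm R) : cons R a (cons R a⁻¹ x) = x := by
  induction x using Quotient.ind with
  | _ w =>
    by_cases hc : ∃ t, SwapEquiv R w.1 (a :: t)
    · obtain ⟨t, ht⟩ := hc
      have htr : Reduced R (a :: t) := ht.reduced w.2
      have hnc : ¬ ∃ s, SwapEquiv R t (a⁻¹ :: s) := fun ⟨s, hs⟩ =>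
        not_reduced_cons_inv_cons a s ((ht.trans (hs.cons a)).reduced w.2)
      rw [cons_mk_of_swapEquiv htr.of_cons (by rwa [inv_inv]),
        cons_mk_of_not_exists (w := ⟨t, htr.of_cons⟩) hnc]
      exact Quotient.sound ht.symm
    · have hc' : ¬ ∃ t, SwapEquiv R w.1 (a⁻¹⁻¹ :: t) := by rwa [inv_inv]
      rw [cons_mk_of_not_exists hc']
      exact cons_mk_of_swapEquiv w.2 (.refl _)

lemma cons_cons_comm_of_swapEquiv {a b : Letter ι} (hab : R a.gen b.gen) (hne : a.gen ≠ b.gen)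
    {w : ReducedWord R} {t : List (Letter ι)} (ht : SwapEquiv R w.1 (b⁻¹ :: t)) :
    cons R a (cons R b ⟦w⟧) = cons R b (cons R a ⟦w⟧) := by
  have htr : Reduced R t := (ht.reduced w.2).of_cons
  rw [cons_mk_of_swapEquiv htr ht]
  by_cases hs : ∃ s, SwapEquiv R t (a⁻¹ :: s)
  · obtain ⟨s, hs⟩ := hs
    have hw : SwapEquiv R w.1 (a⁻¹ :: b⁻¹ :: s) :=
      ht.trans ((hs.cons _).trans (.swap (a := b⁻¹) (b := a⁻¹) (symm hab) (.refl s)))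
    have hbs : Reduced R (b⁻¹ :: s) := (hw.reduced w.2).of_cons
    rw [cons_mk_of_swapEquiv hbs.of_cons hs, cons_mk_of_swapEquiv hbs hw,
      cons_mk_of_swapEquiv hbs.of_cons (.refl _)]
  · have hw : ¬ ∃ s, SwapEquiv R w.1 (a⁻¹ :: s) := fun ⟨s, hs'⟩ =>
      not_exists_swapEquiv_cons_cons_of_ne (ne_of_apply_ne Letter.gen (by simpa using hne.symm))
        hs ⟨s, ht.symm.trans hs'⟩
    rw [cons_mk_of_not_exists (w := ⟨t, htr⟩) hs, cons_mk_of_not_exists hw]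
    exact (cons_mk_of_swapEquiv _ ((ht.cons a).trans (.swap (b := b⁻¹) hab (.refl t)))).symm

lemma cons_cons_comm {a b : Letter ι} (hab : R a.gen b.gen) (hne : a.gen ≠ b.gen)
    (x : NormalForm R) : cons R a (cons R b x) = cons R b (cons R a x) := by
  induction x using Quotient.ind with
  | _ w =>
    by_cases hb : ∃ t, SwapEquiv R w.1 (b⁻¹ :: t)
    · exact cons_cons_comm_of_swapEquiv hab hne hb.choose_spec
    by_cases ha : ∃ t, SwapEquiv R w.1 (a⁻¹ :: t)
    · exact (cons_cons_comm_of_swapEquiv (symm hab) hne.symm ha.choose_spec).symm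
    have hab' : a ≠ b⁻¹ := ne_of_apply_ne Letter.gen (by simpa using hne)
    have hba' : b ≠ a⁻¹ := ne_of_apply_ne Letter.gen (by simpa using hne.symm)
    rw [cons_mk_of_not_exists hb, cons_mk_of_not_exists ha,
      cons_mk_of_not_exists (w := ⟨b :: w.1, _⟩) (not_exists_swapEquiv_cons_cons_of_ne hba' ha),
      cons_mk_of_not_exists (w := ⟨a :: w.1, _⟩) (not_exists_swapEquiv_cons_cons_of_ne hab' hb)]
    exact Quotient.sound (.swap hab (.refl _))

end NormalForm

variable (R) in
noncomputable def consPerm (a : Letter ι) : Equiv.Perm (NormalForm R) where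
  toFun := NormalForm.cons R a
  invFun := NormalForm.cons R a⁻¹
  left_inv x := by simpa using NormalForm.cons_cons_inv a⁻¹ x
  right_inv := NormalForm.cons_cons_inv a

lemma consPerm_inv (a : Letter ι) : consPerm R a⁻¹ = (consPerm R a)⁻¹ :=
  Equiv.ext fun _ => rfl

lemma consPerm_commute {a b : Letter ι} (hab : R a.gen b.gen) :
    Commute (consPerm R a) (consPerm R b) := by
  by_cases hne : a.gen = b.gen
  · rcases Letter.eq_or_eq_inv_of_gen_eq hne with rfl | rfl
    · exact .refl _
    · rw [consPerm_inv]
      exact (Commute.refl _).inv_right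
  · exact Equiv.ext (NormalForm.cons_cons_comm hab hne)

variable {G : Type*} [Group G] {f : ι → G} {φ : G →* Equiv.Perm (NormalForm R)}

lemma map_letter_eval (hφ : ∀ i, φ (f i) = consPerm R ⟨i, true⟩) (a : Letter ι) :
    φ (a.eval f) = consPerm R a := by
  rcases a with ⟨i, _ | _⟩
  · simp [Letter.eval, hφ, ← consPerm_inv]
  · exact hφ i

lemma map_wordEval_nil (hφ : ∀ i, φ (f i) = consPerm R ⟨i, true⟩) {w : List (Letter ι)}
    (hw : Reduced R w) : φ (wordEval f w) (NormalForm.nil R) = ⟦⟨w, hw⟩⟧ := by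
  induction w with
  | nil => simp [NormalForm.nil]
  | cons a w ih =>
    rw [wordEval_cons, map_mul, Equiv.Perm.mul_apply, ih hw.of_cons, map_letter_eval hφ]
    exact NormalForm.cons_mk_of_not_exists (reduced_cons_iff.1 hw).2

lemma Reduced.swapEquiv_of_wordEval_eq (hφ : ∀ i, φ (f i) = consPerm R ⟨i, true⟩)
    {w v : List (Letter ι)} (hw : Reduced R w) (hv : Reduced R v)
    (h : wordEval f w = wordEval f v) : SwapEquiv R w v :=
  Quotient.exact (by rw [← map_wordEval_nil hφ hw, h, map_wordEval_nil hφ hv] :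
    (⟦⟨w, hw⟩⟧ : NormalForm R) = ⟦⟨v, hv⟩⟧)

lemma Reduced.length_le (hf : ∀ i j, R i j → Commute (f i) (f j))
    (hφ : ∀ i, φ (f i) = consPerm R ⟨i, true⟩) {w v : List (Letter ι)} (hw : Reduced R w)
    (h : wordEval f w = wordEval f v) : w.length ≤ v.length := by
  obtain ⟨u, hu, huv, hlen⟩ := exists_reduced_wordEval_eq hf v
  exact (hw.swapEquiv_of_wordEval_eq hφ hu (h.trans huv.symm)).length_eq ▸ hlen

end NormalForm

section PathGroup

variable {m : ℕ}

def pathAdj (m : ℕ) (i j : Fin m) : Prop := (i : ℕ) ≤ j + 1 ∧ (j : ℕ) ≤ i + 1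

instance : Std.Symm (pathAdj m) := ⟨fun _ _ h => ⟨h.2, h.1⟩⟩

lemma lift_eq_one_of_mem_pathRels {G : Type*} [Group G] {f : Fin m → G}
    (hf : ∀ i j : Fin m, (i : ℕ) + 1 = j → Commute (f i) (f j)) :
    ∀ r ∈ pathRels m, FreeGroup.lift f r = 1 := by
  rintro _ ⟨i, j, hij, rfl⟩
  simpa [commutatorElement_def] using commutatorElement_eq_one_iff_commute.2 (hf i j hij)

lemma pathGen_commute {i j : Fin m} (h : pathAdj m i j) :
    Commute (pathGen m i) (pathGen m j) := by
  wlog hij : (i : ℕ) ≤ j generalizing i j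
  · exact (this (symm h) (by omega)).symm
  obtain hij | hij : i = j ∨ (i : ℕ) + 1 = j := by
    rcases h with ⟨-, h⟩
    omega
  · exact hij ▸ .refl _
  · rw [← commutatorElement_eq_one_iff_commute]
    simpa [commutatorElement_def, pathGen, PresentedGroup.of] using
      PresentedGroup.one_of_mem (rels := pathRels m) ⟨i, j, hij, rfl⟩

lemma exists_letter_eval_eq {x : PathGroup m} (hx : x ∈ pathLetters m) :
    ∃ a : Letter (Fin m), a.eval (pathGen m) = x := by
  obtain ⟨i, rfl | rfl⟩ := hx
  exacts [⟨⟨i, true⟩, rfl⟩, ⟨⟨i, false⟩, rfl⟩]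

variable (m) in
noncomputable def pathToPerm : PathGroup m →* Equiv.Perm (NormalForm (pathAdj m)) :=
  PresentedGroup.toGroup (f := fun i => consPerm (pathAdj m) ⟨i, true⟩)
    (lift_eq_one_of_mem_pathRels fun i j hij =>
      consPerm_commute (show pathAdj m i j from ⟨by omega, by omega⟩))

variable (S : Set (Fin m)) [DecidablePred (· ∈ S)]

noncomputable def pathRetraction : PathGroup m →* PathGroup m :=
  PresentedGroup.toGroup (f := fun i => if i ∈ S then pathGen m i else 1)
    (lift_eq_one_of_mem_pathRels fun i j hij => by
      split_ifs
      exacts [pathGen_commute ⟨by omega, by omega⟩, .one_right _, .one_left _, .one_left _])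

variable {S}

lemma pathRetraction_pathGen (i : Fin m) :
    pathRetraction S (pathGen m i) = if i ∈ S then pathGen m i else 1 :=
  PresentedGroup.toGroup.of _

lemma pathRetraction_eq_self {g : PathGroup m} (hg : g ∈ Subgroup.closure (pathGen m '' S)) :
    pathRetraction S g = g := by
  suffices Subgroup.closure (pathGen m '' S) ≤ (pathRetraction S).eqLocus (MonoidHom.id _) from
    this hg
  rw [Subgroup.closure_le]
  rintro _ ⟨i, hi, rfl⟩
  exact (pathRetraction_pathGen i).trans (if_pos hi)

lemma closure_le_closure_pathGen {C : Set (PathGroup m)} (hC : C ⊆ pathLetters m)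
    (hCinv : ∀ x ∈ C, x⁻¹ ∈ C) :
    Subgroup.closure C ≤ Subgroup.closure (pathGen m '' {i | pathGen m i ∈ C}) := by
  rw [Subgroup.closure_le]
  intro x hx
  obtain ⟨i, rfl | rfl⟩ := hC hx
  · exact Subgroup.subset_closure ⟨i, hx, rfl⟩
  · exact inv_mem (Subgroup.subset_closure ⟨i, by simpa using hCinv _ hx, rfl⟩)

lemma Reduced.forall_gen_mem_of_pathRetraction {w : List (Letter (Fin m))}
    (hw : Reduced (pathAdj m) w)
    (h : pathRetraction S (wordEval (pathGen m) w) = wordEval (pathGen m) w) :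
    ∀ a ∈ w, a.gen ∈ S := by
  have hcomp : pathRetraction S ∘ pathGen m = fun i => if i ∈ S then pathGen m i else 1 :=
    funext pathRetraction_pathGen
  rw [map_wordEval, hcomp, wordEval_ite_one] at h
  have hlen := hw.length_le (fun _ _ => pathGen_commute) (φ := pathToPerm m)
    (fun _ => PresentedGroup.toGroup.of _) h.symm
  simpa using List.filter_eq_self.1 (List.filter_sublist.eq_of_length_le hlen)

end PathGroup

theorem stmt15_general (m : ℕ) (C : Set (PathGroup m))
    (hC : C ⊆ pathLetters m) (hCinv : ∀ x ∈ C, x⁻¹ ∈ C)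
    (N : ℕ) (w : Fin N → PathGroup m) (hw : ∀ i, w i ∈ pathLetters m)
    (hred : ∀ u v : Fin N, u < v → w u * w v = 1 →
      ∃ t : Fin N, u < t ∧ t < v ∧ ¬ Commute (w t) (w u)) :
    (List.ofFn w).prod ∈ Subgroup.closure C ↔ ∀ i, w i ∈ C := by
  classical
  refine ⟨fun hmem => ?_, fun hall => Subgroup.list_prod_mem _ ?_⟩
  · choose ℓ hℓ using fun i => exists_letter_eval_eq (hw i)
    have hprod : (List.ofFn w).prod = wordEval (pathGen m) (List.ofFn ℓ) := by
      simp [wordEval, List.map_ofFn, Function.comp_def, hℓ]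
    have hℓred : Reduced (pathAdj m) (List.ofFn ℓ) := reduced_ofFn ℓ fun u v huv hinv => by
      obtain ⟨t, hut, htv, hnc⟩ :=
        hred u v huv (by rw [← hℓ, ← hℓ, hinv, Letter.eval_inv, mul_inv_cancel])
      refine ⟨t, hut, htv, fun h => hnc ?_⟩
      rw [← hℓ, ← hℓ]
      exact Letter.eval_commute (pathGen_commute h)
    rw [hprod] at hmem
    have hgen := hℓred.forall_gen_mem_of_pathRetraction
      (pathRetraction_eq_self (closure_le_closure_pathGen hC hCinv hmem))
    intro i
    rw [← hℓ]
    exact Letter.eval_mem hCinv (hgen _ (List.mem_ofFn.2 ⟨i, rfl⟩))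
  · rintro _ hx
    obtain ⟨i, rfl⟩ := List.mem_ofFn.1 hx
    exact Subgroup.subset_closure (hall i)

/-- Subgroup membership criterion for reduced words: let `C` be a set of letters closed under
inverses and `G_C = ⟨C⟩`.  If `(x_1, …, x_N)` is a reduced word (whenever `x_u · x_v = 1` with
`u < v`, some intermediate letter fails to commute with `x_u`), then `x_1 ⋯ x_N ∈ G_C` iff
every letter lies in `C`. -/
theorem stmt15 (m : ℕ) (hm : 1 ≤ m) (C : Set (PathGroup m))
    (hC : C ⊆ pathLetters m) (hCinv : ∀ x ∈ C, x⁻¹ ∈ C)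
    (N : ℕ) (w : Fin N → PathGroup m) (hw : ∀ i, w i ∈ pathLetters m)
    (hred : ∀ u v : Fin N, u < v → w u * w v = 1 →
      ∃ t : Fin N, u < t ∧ t < v ∧ ¬ Commute (w t) (w u)) :
    (List.ofFn w).prod ∈ Subgroup.closure C ↔ ∀ i, w i ∈ C :=
  stmt15_general m C hC hCinv N w hw hred
end

section
/- Let m ≥ 1 and let G be the group presented by generators g_1, …, g_m with relations [g_i, g_{i+1}] = 1 for i = 1, …, m−1. If (x_1,…,x_N) and (y_1,…,y_N) are reduced words of the same length such that the first letters x_1 and y_1 do not commute in G, then x_1⋯x_N ≠ y_1⋯y_N in G. -/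
/-!
The group acts on reduced words modulo swaps of adjacent commuting letters: a letter `a`
deletes the first `a⁻¹` that commutes with every letter in front of it, and is prepended if
there is none. The defining relations hold because the actions of adjacent generators commute,
and acting on the empty word with the product of a reduced word returns that word's class, so
reduced words with equal products are related by swaps. Swaps preserve the property "`c` occurs
and commutes with every letter before it", which holds for the first letter of one word and so
forces it to commute with the first letter of the other.
-/

namespace RightAngledArtin

open Relation

variable {α : Type*}

def invLetter (a : α × Bool) : α × Bool := (a.1, !a.2)

@[simp] lemma invLetter_invLetter (a : α × Bool) : invLetter (invLetter a) = a := by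
  simp [invLetter]

@[simp] lemma invLetter_fst (a : α × Bool) : (invLetter a).1 = a.1 := rfl

section Swaps

variable (G : SimpleGraph α)

def Commutes (a b : α × Bool) : Prop := a.1 = b.1 ∨ G.Adj a.1 b.1

inductive Swap : List (α × Bool) → List (α × Bool) → Prop
  | head {a b : α × Bool} (q : List (α × Bool)) :
      Commutes G a b → Swap (a :: b :: q) (b :: a :: q)
  | cons (c : α × Bool) {v w : List (α × Bool)} : Swap v w → Swap (c :: v) (c :: w)

abbrev SwapEquiv : List (α × Bool) → List (α × Bool) → Prop := ReflTransGen (Swap G)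

def CanLead (c : α × Bool) : List (α × Bool) → Prop
  | [] => False
  | d :: w => d = c ∨ (Commutes G d c ∧ CanLead c w)

variable {G}

lemma Commutes.refl (a : α × Bool) : Commutes G a a := Or.inl rfl

lemma Commutes.symm {a b : α × Bool} (h : Commutes G a b) : Commutes G b a :=
  h.imp Eq.symm SimpleGraph.Adj.symm

@[simp] lemma commutes_invLetter_left {a b : α × Bool} :
    Commutes G (invLetter a) b ↔ Commutes G a b := Iff.rfl

lemma Swap.symm {v w : List (α × Bool)} (h : Swap G v w) : Swap G w v := by
  induction h with
  | head q h => exact .head q h.symm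
  | cons c _ ih => exact .cons c ih

instance : Std.Symm (Swap G) := ⟨fun _ _ => Swap.symm⟩

lemma swapEquiv_equivalence : Equivalence (SwapEquiv G) :=
  ⟨fun _ => .refl, fun h => Std.Symm.symm _ _ h, .trans⟩

lemma SwapEquiv.cons (c : α × Bool) {v w : List (α × Bool)} (h : SwapEquiv G v w) :
    SwapEquiv G (c :: v) (c :: w) :=
  ReflTransGen.lift (c :: ·) (fun _ _ => Swap.cons c) _ _ h

lemma Swap.canLead {c : α × Bool} {v w : List (α × Bool)} (h : Swap G v w)
    (hv : CanLead G c v) : CanLead G c w := by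
  induction h with
  | head q hab =>
    rcases hv with rfl | ⟨ha, rfl | ⟨hb, hq⟩⟩
    · exact .inr ⟨hab.symm, .inl rfl⟩
    · exact .inl rfl
    · exact .inr ⟨hb, .inr ⟨ha, hq⟩⟩
  | cons d _ ih =>
    rcases hv with rfl | ⟨hd, hv⟩
    · exact .inl rfl
    · exact .inr ⟨hd, ih hv⟩

lemma SwapEquiv.canLead {c : α × Bool} {v w : List (α × Bool)} (h : SwapEquiv G v w)
    (hv : CanLead G c v) : CanLead G c w := by
  induction h with
  | refl => exact hv
  | tail _ hs ih => exact hs.canLead ih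

theorem commutes_of_swapEquiv_cons {a b : α × Bool} {v w : List (α × Bool)}
    (h : SwapEquiv G (a :: v) (b :: w)) : Commutes G a b := by
  rcases (swapEquiv_equivalence.symm h).canLead (c := b) (.inl rfl) with rfl | ⟨hab, -⟩
  exacts [.refl a, hab]

end Swaps

section Cancel

variable [DecidableEq α] (G : SimpleGraph α) [DecidableRel G.Adj]

instance : DecidableRel (Commutes G) := fun _ _ => instDecidableOr

def cancel (a : α × Bool) : List (α × Bool) → Option (List (α × Bool))
  | [] => none
  | b :: w =>
    if b = invLetter a then some w
    else if Commutes G a b then (cancel a w).map (b :: ·) else none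

def IsReduced : List (α × Bool) → Prop
  | [] => True
  | a :: w => cancel G a w = none ∧ IsReduced w

def mulLetter (a : α × Bool) (w : List (α × Bool)) : List (α × Bool) :=
  (cancel G a w).getD (a :: w)

variable {G}

lemma cancel_cons (a b : α × Bool) (w : List (α × Bool)) :
    cancel G a (b :: w) = if b = invLetter a then some w
      else if Commutes G a b then (cancel G a w).map (b :: ·) else none := rfl

lemma cancel_eq_none_of_cancel_eq_some {a b : α × Bool} (hab : Commutes G a b) :
    ∀ {w w' : List (α × Bool)}, cancel G a w = some w' → cancel G b w = none →
      cancel G b w' = none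
  | [], _, h, _ => by simp [cancel] at h
  | c :: t, w', h, hb => by
    rw [cancel_cons] at h hb
    split_ifs at h with hca hac
    · cases h
      split_ifs at hb with hcb hbc
      · simpa using hb
      · exact absurd (hca ▸ hab.symm) hbc
    · obtain ⟨t', ht', rfl⟩ := Option.map_eq_some_iff.mp h
      rw [cancel_cons]
      split_ifs at hb ⊢ with hcb hbc
      · simp [cancel_eq_none_of_cancel_eq_some hab ht' (by simpa using hb)]
      · rfl

lemma IsReduced.of_cancel_eq_some {a : α × Bool} :
    ∀ {w w' : List (α × Bool)}, IsReduced G w → cancel G a w = some w' → IsReduced G w'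
  | [], _, _, h => by simp [cancel] at h
  | c :: t, w', ⟨hc, ht⟩, h => by
    rw [cancel_cons] at h
    split_ifs at h with hca hac
    · cases h
      exact ht
    · obtain ⟨t', ht', rfl⟩ := Option.map_eq_some_iff.mp h
      exact ⟨cancel_eq_none_of_cancel_eq_some hac ht' hc, ht.of_cancel_eq_some ht'⟩

lemma mulLetter_of_cancel_eq_none {a : α × Bool} {w : List (α × Bool)}
    (h : cancel G a w = none) : mulLetter G a w = a :: w := by
  simp [mulLetter, h]

lemma mulLetter_of_cancel_eq_some {a : α × Bool} {w w' : List (α × Bool)}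
    (h : cancel G a w = some w') : mulLetter G a w = w' := by
  simp [mulLetter, h]

lemma isReduced_mulLetter {w : List (α × Bool)} (hw : IsReduced G w) (a : α × Bool) :
    IsReduced G (mulLetter G a w) := by
  cases h : cancel G a w with
  | none => rw [mulLetter_of_cancel_eq_none h]; exact ⟨h, hw⟩
  | some w' => rw [mulLetter_of_cancel_eq_some h]; exact hw.of_cancel_eq_some h

lemma swapEquiv_of_cancel_eq_some {a : α × Bool} :
    ∀ {w w' : List (α × Bool)}, cancel G a w = some w' → SwapEquiv G (invLetter a :: w') w
  | [], _, h => by simp [cancel] at h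
  | b :: t, w', h => by
    rw [cancel_cons] at h
    split_ifs at h with hba hab
    · cases h
      rw [hba]
    · obtain ⟨t', ht', rfl⟩ := Option.map_eq_some_iff.mp h
      exact .head (.head t' hab) (SwapEquiv.cons b (swapEquiv_of_cancel_eq_some ht'))

lemma IsReduced.cancel_invLetter_eq_none {a : α × Bool} :
    ∀ {w w' : List (α × Bool)}, IsReduced G w → cancel G a w = some w' →
      cancel G (invLetter a) w' = none
  | [], _, _, h => by simp [cancel] at h
  | b :: t, w', ⟨hb, ht⟩, h => by
    rw [cancel_cons] at h
    split_ifs at h with hba hab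
    · cases h
      exact hba ▸ hb
    · obtain ⟨t', ht', rfl⟩ := Option.map_eq_some_iff.mp h
      have hba' : b ≠ a := by
        rintro rfl
        simp [ht'] at hb
      rw [cancel_cons, if_neg (by simpa using hba'), if_pos (by simpa using hab),
        ht.cancel_invLetter_eq_none ht']
      rfl

lemma mulLetter_invLetter_mulLetter {w : List (α × Bool)} (hw : IsReduced G w)
    (a : α × Bool) : SwapEquiv G (mulLetter G (invLetter a) (mulLetter G a w)) w := by
  cases h : cancel G a w with
  | none =>
    have hcancel : cancel G (invLetter a) (a :: w) = some w := by simp [cancel_cons]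
    rw [mulLetter_of_cancel_eq_none h, mulLetter_of_cancel_eq_some hcancel]
  | some w' =>
    rw [mulLetter_of_cancel_eq_some h,
      mulLetter_of_cancel_eq_none (hw.cancel_invLetter_eq_none h)]
    exact swapEquiv_of_cancel_eq_some h

lemma cancel_swap {a : α × Bool} {v w : List (α × Bool)} (h : Swap G v w) :
    Option.Rel (SwapEquiv G) (cancel G a v) (cancel G a w) := by
  induction h with
  | @head c d q hcd =>
    by_cases hc : c = invLetter a
    · subst hc
      have had : Commutes G a d := hcd
      by_cases hd : d = invLetter a
      · subst hd
        rw [cancel_cons, if_pos rfl]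
        exact .some .refl
      · simp only [cancel_cons, hd, had, if_true, if_false]
        exact .some .refl
    · by_cases hd : d = invLetter a
      · subst hd
        have hac : Commutes G a c := hcd.symm
        simp only [cancel_cons, hc, hac, if_true, if_false]
        exact .some .refl
      · simp only [cancel_cons, hc, hd, if_false]
        split_ifs
        · cases cancel G a q
          exacts [.none, .some (.single (.head _ hcd))]
        all_goals exact .none
  | @cons e v w h ih =>
    rw [cancel_cons, cancel_cons]
    split_ifs
    · exact .some (.single h)
    · generalize cancel G a v = x, cancel G a w = y at ih
      cases ih
      exacts [.some (SwapEquiv.cons e ‹_›), .none]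
    · exact .none

lemma swapEquiv_mulLetter (a : α × Bool) {v w : List (α × Bool)} (h : SwapEquiv G v w) :
    SwapEquiv G (mulLetter G a v) (mulLetter G a w) := by
  refine ReflTransGen.lift' (mulLetter G a) (fun v' w' hs => ?_) _ _ h
  show SwapEquiv G (mulLetter G a v') (mulLetter G a w')
  have hrel := cancel_swap (a := a) hs
  cases hv : cancel G a v' <;> cases hw : cancel G a w' <;> simp only [hv, hw] at hrel
  · rw [mulLetter_of_cancel_eq_none hv, mulLetter_of_cancel_eq_none hw]
    exact .single (.cons a hs)
  · simp at hrel
  · simp at hrel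
  · rw [mulLetter_of_cancel_eq_some hv, mulLetter_of_cancel_eq_some hw]
    simpa using hrel

lemma cancel_cancel {a b : α × Bool} (hab : G.Adj a.1 b.1) :
    ∀ {w wa wb : List (α × Bool)}, cancel G a w = some wa → cancel G b w = some wb →
      ∃ u, cancel G b wa = some u ∧ cancel G a wb = some u
  | [], _, _, ha, _ => by simp [cancel] at ha
  | c :: t, wa, wb, ha, hb => by
    have hne : invLetter a ≠ invLetter b := fun h =>
      G.ne_of_adj hab (by simpa using congrArg Prod.fst h)
    rw [cancel_cons] at ha hb
    split_ifs at ha with hca hac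
    · cases ha
      rw [if_neg (hca ▸ hne), if_pos (hca ▸ Or.inr hab.symm)] at hb
      obtain ⟨tb, htb, rfl⟩ := Option.map_eq_some_iff.mp hb
      exact ⟨tb, htb, by rw [cancel_cons, if_pos hca]⟩
    · split_ifs at hb with hcb hbc
      · cases hb
        obtain ⟨ta, hta, rfl⟩ := Option.map_eq_some_iff.mp ha
        exact ⟨ta, by rw [cancel_cons, if_pos hcb], hta⟩
      · obtain ⟨ta, hta, rfl⟩ := Option.map_eq_some_iff.mp ha
        obtain ⟨tb, htb, rfl⟩ := Option.map_eq_some_iff.mp hb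
        obtain ⟨u, hu1, hu2⟩ := cancel_cancel hab hta htb
        exact ⟨c :: u, by rw [cancel_cons, if_neg hcb, if_pos hbc, hu1]; rfl,
          by rw [cancel_cons, if_neg hca, if_pos hac, hu2]; rfl⟩

lemma cancel_cons_of_adj {a b : α × Bool} (hab : G.Adj a.1 b.1) (w : List (α × Bool)) :
    cancel G a (b :: w) = (cancel G a w).map (b :: ·) := by
  have hba : b ≠ invLetter a := fun h => G.ne_of_adj hab (by simp [h])
  rw [cancel_cons, if_neg hba, if_pos (show Commutes G a b from Or.inr hab)]

lemma mulLetter_comm {a b : α × Bool} (hab : G.Adj a.1 b.1) (w : List (α × Bool)) :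
    SwapEquiv G (mulLetter G a (mulLetter G b w)) (mulLetter G b (mulLetter G a w)) := by
  cases ha : cancel G a w with
  | none =>
    cases hb : cancel G b w with
    | none =>
      rw [mulLetter_of_cancel_eq_none ha, mulLetter_of_cancel_eq_none hb,
        mulLetter_of_cancel_eq_none (by rw [cancel_cons_of_adj hab, ha]; rfl),
        mulLetter_of_cancel_eq_none (by rw [cancel_cons_of_adj hab.symm, hb]; rfl)]
      exact .single (.head w (Or.inr hab))
    | some wb =>
      rw [mulLetter_of_cancel_eq_none ha, mulLetter_of_cancel_eq_some hb,
        mulLetter_of_cancel_eq_none (cancel_eq_none_of_cancel_eq_some (Or.inr hab.symm) hb ha),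
        mulLetter_of_cancel_eq_some (by rw [cancel_cons_of_adj hab.symm, hb]; rfl)]
  | some wa =>
    cases hb : cancel G b w with
    | none =>
      rw [mulLetter_of_cancel_eq_some ha, mulLetter_of_cancel_eq_none hb,
        mulLetter_of_cancel_eq_none (cancel_eq_none_of_cancel_eq_some (Or.inr hab) ha hb),
        mulLetter_of_cancel_eq_some (by rw [cancel_cons_of_adj hab, ha]; rfl)]
    | some wb =>
      obtain ⟨u, hu₁, hu₂⟩ := cancel_cancel hab ha hb
      rw [mulLetter_of_cancel_eq_some ha, mulLetter_of_cancel_eq_some hb,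
        mulLetter_of_cancel_eq_some hu₁, mulLetter_of_cancel_eq_some hu₂]

lemma exists_of_cancel_ofFn_eq_some {a : α × Bool} :
    ∀ {N : ℕ} {f : Fin N → α × Bool} {w' : List (α × Bool)},
      cancel G a (List.ofFn f) = some w' →
      ∃ k, f k = invLetter a ∧ ∀ j < k, Commutes G a (f j)
  | 0, _, _, h => by simp [cancel] at h
  | _ + 1, f, _, h => by
    rw [List.ofFn_succ, cancel_cons] at h
    split_ifs at h with h0 hc
    · exact ⟨0, h0, fun j hj => absurd hj (Fin.not_lt_zero j)⟩
    · obtain ⟨_, ht, -⟩ := Option.map_eq_some_iff.mp h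
      obtain ⟨k, hk, hlt⟩ := exists_of_cancel_ofFn_eq_some ht
      refine ⟨k.succ, hk, Fin.cases (fun _ => hc) fun j hj => hlt j ?_⟩
      exact Fin.succ_lt_succ_iff.mp hj

lemma isReduced_ofFn : ∀ {N : ℕ} (f : Fin N → α × Bool),
    (∀ u v, u < v → f v = invLetter (f u) → ∃ t, u < t ∧ t < v ∧ ¬ Commutes G (f t) (f u)) →
      IsReduced G (List.ofFn f)
  | 0, _, _ => by simp [IsReduced]
  | _ + 1, f, h => by
    rw [List.ofFn_succ]
    refine ⟨Option.eq_none_iff_forall_ne_some.mpr fun w' hw' => ?_,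
      isReduced_ofFn _ fun u v huv hv => ?_⟩
    · obtain ⟨k, hk, hlt⟩ := exists_of_cancel_ofFn_eq_some hw'
      obtain ⟨t, h0t, htk, hnc⟩ := h 0 k.succ (Fin.succ_pos k) hk
      obtain ⟨s, rfl⟩ := Fin.exists_succ_eq.mpr (Fin.pos_iff_ne_zero.mp h0t)
      exact hnc (hlt s (Fin.succ_lt_succ_iff.mp htk)).symm
    · obtain ⟨t, hut, htv, hnc⟩ := h u.succ v.succ (Fin.succ_lt_succ_iff.mpr huv) hv
      obtain ⟨s, rfl⟩ :=
        Fin.exists_succ_eq.mpr (Fin.pos_iff_ne_zero.mp ((Fin.succ_pos u).trans hut))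
      exact ⟨s, Fin.succ_lt_succ_iff.mp hut, Fin.succ_lt_succ_iff.mp htv, hnc⟩

end Cancel

section NormalForm

variable [DecidableEq α] (G : SimpleGraph α) [DecidableRel G.Adj]

def normalFormSetoid : Setoid {w // IsReduced G w} :=
  Setoid.comap Subtype.val ⟨SwapEquiv G, swapEquiv_equivalence⟩

def NormalForm : Type _ := Quotient (normalFormSetoid G)

def NormalForm.mk (w : List (α × Bool)) (hw : IsReduced G w) : NormalForm G :=
  Quotient.mk _ ⟨w, hw⟩

def letterAction (a : α × Bool) : NormalForm G → NormalForm G :=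
  Quotient.map (fun w => ⟨mulLetter G a w.1, isReduced_mulLetter w.2 a⟩)
    fun _ _ h => swapEquiv_mulLetter a h

lemma letterAction_invLetter_letterAction (a : α × Bool) (s : NormalForm G) :
    letterAction G (invLetter a) (letterAction G a s) = s :=
  Quotient.inductionOn s fun w => Quotient.sound (mulLetter_invLetter_mulLetter w.2 a)

def letterPerm (a : α × Bool) : Equiv.Perm (NormalForm G) where
  toFun := letterAction G a
  invFun := letterAction G (invLetter a)
  left_inv := letterAction_invLetter_letterAction G a
  right_inv s := by simpa using letterAction_invLetter_letterAction G (invLetter a) s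

variable {G}

lemma NormalForm.mk_eq_mk {v w : List (α × Bool)} {hv : IsReduced G v} {hw : IsReduced G w} :
    NormalForm.mk G v hv = NormalForm.mk G w hw ↔ SwapEquiv G v w :=
  Quotient.eq

lemma letterPerm_mk (a : α × Bool) {w : List (α × Bool)} (hw : IsReduced G w) :
    letterPerm G a (NormalForm.mk G w hw) =
      NormalForm.mk G (mulLetter G a w) (isReduced_mulLetter hw a) :=
  rfl

lemma inv_letterPerm (a : α × Bool) : (letterPerm G a)⁻¹ = letterPerm G (invLetter a) :=
  Equiv.ext fun _ => rfl

lemma commute_letterPerm {a b : α × Bool} (hab : G.Adj a.1 b.1) :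
    Commute (letterPerm G a) (letterPerm G b) :=
  Equiv.ext <| Quotient.ind fun w => Quotient.sound (mulLetter_comm hab w.1)

end NormalForm

section PathGroup

open SimpleGraph

variable {m : ℕ}

instance : DecidableRel (pathGraph m).Adj := fun _ _ => decidable_of_iff _ pathGraph_adj.symm

def pathLetter (a : Fin m × Bool) : PathGroup m :=
  if a.2 then pathGen m a.1 else (pathGen m a.1)⁻¹

lemma pathLetter_invLetter (a : Fin m × Bool) : pathLetter (invLetter a) = (pathLetter a)⁻¹ := by
  rcases a with ⟨i, _ | _⟩ <;> simp [pathLetter, invLetter]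

lemma exists_pathLetter_eq {x : PathGroup m} (hx : x ∈ pathLetters m) :
    ∃ a, pathLetter a = x := by
  obtain ⟨i, rfl | rfl⟩ := hx
  exacts [⟨(i, true), rfl⟩, ⟨(i, false), rfl⟩]

lemma commute_pathGen {i j : Fin m} (hij : (pathGraph m).Adj i j) :
    Commute (pathGen m i) (pathGen m j) := by
  wlog h : (i : ℕ) + 1 = j generalizing i j
  · exact (this hij.symm ((pathGraph_adj.mp hij).resolve_left h)).symm
  have hrel := PresentedGroup.one_of_mem (rels := pathRels m) ⟨i, j, h, rfl⟩
  simp only [map_mul, map_inv] at hrel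
  exact commutatorElement_eq_one_iff_commute.mp hrel

lemma commute_pathLetter {a b : Fin m × Bool} (hab : Commutes (pathGraph m) a b) :
    Commute (pathLetter a) (pathLetter b) := by
  have hgen : Commute (pathGen m a.1) (pathGen m b.1) :=
    hab.elim (fun h => h ▸ .refl _) commute_pathGen
  rcases a with ⟨i, _ | _⟩ <;> rcases b with ⟨j, _ | _⟩ <;> simpa [pathLetter] using hgen

def normalFormAction : PathGroup m →* Equiv.Perm (NormalForm (pathGraph m)) :=
  PresentedGroup.toGroup (f := fun i => letterPerm _ (i, true)) <| by
    rintro _ ⟨i, j, hij, rfl⟩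
    have hc := commute_letterPerm (G := pathGraph m) (a := (i, true)) (b := (j, true))
      (pathGraph_adj.mpr (.inl hij))
    simp only [map_mul, map_inv, FreeGroup.lift_apply_of, hc.eq]
    group

lemma normalFormAction_pathLetter (a : Fin m × Bool) :
    normalFormAction (pathLetter a) = letterPerm _ a := by
  rcases a with ⟨i, _ | _⟩
  · rw [pathLetter, if_neg Bool.false_ne_true, map_inv, normalFormAction, pathGen,
      PresentedGroup.toGroup.of, inv_letterPerm]
    rfl
  · exact PresentedGroup.toGroup.of _

lemma normalFormAction_prod_map_pathLetter :
    ∀ (w : List (Fin m × Bool)) (hw : IsReduced (pathGraph m) w),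
      normalFormAction (w.map pathLetter).prod (NormalForm.mk _ [] trivial) =
        NormalForm.mk _ w hw
  | [], _ => rfl
  | a :: w, ⟨ha, hw⟩ => by
    rw [List.map_cons, List.prod_cons, map_mul, Equiv.Perm.mul_apply,
      normalFormAction_prod_map_pathLetter w hw, normalFormAction_pathLetter, letterPerm_mk]
    exact NormalForm.mk_eq_mk.mpr (by rw [mulLetter_of_cancel_eq_none ha])

theorem swapEquiv_of_prod_map_pathLetter_eq {v w : List (Fin m × Bool)}
    (hv : IsReduced (pathGraph m) v) (hw : IsReduced (pathGraph m) w)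
    (h : (v.map pathLetter).prod = (w.map pathLetter).prod) : SwapEquiv (pathGraph m) v w := by
  rw [← NormalForm.mk_eq_mk (hv := hv) (hw := hw),
    ← normalFormAction_prod_map_pathLetter v hv, ← normalFormAction_prod_map_pathLetter w hw, h]

lemma isReduced_ofFn_of_pathLetter {N : ℕ} (ℓ : Fin N → Fin m × Bool)
    (h : ∀ u v : Fin N, u < v → pathLetter (ℓ u) * pathLetter (ℓ v) = 1 →
      ∃ t : Fin N, u < t ∧ t < v ∧ ¬ Commute (pathLetter (ℓ t)) (pathLetter (ℓ u))) :
    IsReduced (pathGraph m) (List.ofFn ℓ) :=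
  isReduced_ofFn ℓ fun u v huv hv =>
    (h u v huv (by rw [hv, pathLetter_invLetter, mul_inv_cancel])).imp fun _ ht =>
      ⟨ht.1, ht.2.1, fun hc => ht.2.2 (commute_pathLetter hc)⟩

end PathGroup

end RightAngledArtin

open RightAngledArtin in
theorem stmt16_general (m : ℕ) (N : ℕ) (hN : 0 < N)
    (x y : Fin N → PathGroup m)
    (hx : ∀ i, x i ∈ pathLetters m) (hy : ∀ i, y i ∈ pathLetters m)
    (hxred : ∀ u v : Fin N, u < v → x u * x v = 1 →
      ∃ t : Fin N, u < t ∧ t < v ∧ ¬ Commute (x t) (x u))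
    (hyred : ∀ u v : Fin N, u < v → y u * y v = 1 →
      ∃ t : Fin N, u < t ∧ t < v ∧ ¬ Commute (y t) (y u))
    (hfirst : ¬ Commute (x ⟨0, hN⟩) (y ⟨0, hN⟩)) :
    (List.ofFn x).prod ≠ (List.ofFn y).prod := by
  choose ℓx hℓx using fun i => exists_pathLetter_eq (hx i)
  choose ℓy hℓy using fun i => exists_pathLetter_eq (hy i)
  obtain rfl : x = fun i => pathLetter (ℓx i) := (funext hℓx).symm
  obtain rfl : y = fun i => pathLetter (ℓy i) := (funext hℓy).symm
  obtain ⟨n, rfl⟩ : ∃ n, N = n + 1 := ⟨N - 1, by omega⟩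
  intro hprod
  have hswap := swapEquiv_of_prod_map_pathLetter_eq (isReduced_ofFn_of_pathLetter ℓx hxred)
    (isReduced_ofFn_of_pathLetter ℓy hyred) (by rwa [List.map_ofFn, List.map_ofFn])
  rw [List.ofFn_succ, List.ofFn_succ] at hswap
  exact hfirst (commute_pathLetter (commutes_of_swapEquiv_cons hswap))

/-- If `(x_1,…,x_N)` and `(y_1,…,y_N)` are reduced words whose first letters do not commute,
then they represent different elements of `G = ⟨g_1,…,g_m ∣ [g_i,g_{i+1}]=1⟩`. -/
theorem stmt16 (m : ℕ) (hm : 1 ≤ m) (N : ℕ) (hN : 0 < N)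
    (x y : Fin N → PathGroup m)
    (hx : ∀ i, x i ∈ pathLetters m) (hy : ∀ i, y i ∈ pathLetters m)
    (hxred : ∀ u v : Fin N, u < v → x u * x v = 1 →
      ∃ t : Fin N, u < t ∧ t < v ∧ ¬ Commute (x t) (x u))
    (hyred : ∀ u v : Fin N, u < v → y u * y v = 1 →
      ∃ t : Fin N, u < t ∧ t < v ∧ ¬ Commute (y t) (y u))
    (hfirst : ¬ Commute (x ⟨0, hN⟩) (y ⟨0, hN⟩)) :
    (List.ofFn x).prod ≠ (List.ofFn y).prod :=
  stmt16_general m N hN x y hx hy hxred hyred hfirst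
end

section
/- Let m ≥ 1 and let G be the group presented by generators g_1, …, g_m with relations [g_i, g_{i+1}] = 1 for i = 1, …, m−1. Then every element of G is represented by a reduced word, and two reduced words represent the same element of G if and only if they are related by a finite sequence of swaps of adjacent commuting letters. In particular, the length of a reduced word representing a given element is a well-defined invariant of that element. -/
/-- A word (list of letters) is reduced if whenever two of its letters are mutually inverse,
some letter strictly between them fails to commute with them. -/
def IsReducedWord {m : ℕ} (l : List (PathGroup m)) : Prop :=
  ∀ u v : Fin l.length, u < v → l.get u * l.get v = 1 →
    ∃ t : Fin l.length, u < t ∧ t < v ∧ ¬ Commute (l.get t) (l.get u)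

/-- One swap of two adjacent commuting letters. -/
def SwapStep {m : ℕ} (l₁ l₂ : List (PathGroup m)) : Prop :=
  ∃ (a b : List (PathGroup m)) (x y : PathGroup m), Commute x y ∧
    l₁ = a ++ x :: y :: b ∧ l₂ = a ++ y :: x :: b

theorem List.exists_get_pair_iff_exists_eq_append {β : Type*} (l : List β) (P Q : β → β → Prop) :
    (∃ u v : Fin l.length, u < v ∧ P (l.get u) (l.get v) ∧
      ∀ t : Fin l.length, u < t → t < v → Q (l.get t) (l.get u)) ↔
    ∃ p x q y s, l = p ++ x :: (q ++ y :: s) ∧ P x y ∧ ∀ z ∈ q, Q z x := by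
  constructor
  · rintro ⟨⟨u, hu⟩, ⟨v, hv⟩, huv, hP, hQ⟩
    simp only [Fin.mk_lt_mk, List.get_eq_getElem] at huv hP hQ
    refine ⟨l.take u, l[u], (l.drop (u + 1)).take (v - (u + 1)), l[v], l.drop (v + 1), ?_, hP, ?_⟩
    · conv_lhs => rw [← List.take_append_drop u l, List.drop_eq_getElem_cons hu,
        ← List.take_append_drop (v - (u + 1)) (l.drop (u + 1)), List.drop_drop,
        show u + 1 + (v - (u + 1)) = v by omega, List.drop_eq_getElem_cons hv]
    · intro z hz
      obtain ⟨j, hj, rfl⟩ := List.mem_take_iff_getElem.mp hz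
      simp only [List.length_drop, lt_min_iff] at hj
      simpa using hQ ⟨u + 1 + j, by omega⟩ (Fin.mk_lt_mk.mpr (by omega))
        (Fin.mk_lt_mk.mpr (by omega))
  · rintro ⟨p, x, q, y, s, rfl, hP, hQ⟩
    refine ⟨⟨p.length, by simp⟩, ⟨p.length + (q.length + 1), by simp⟩,
      Fin.mk_lt_mk.mpr (by omega), by simpa [List.getElem_append_right] using hP, ?_⟩
    rintro ⟨t, ht⟩ h₁ h₂
    simp only [Fin.mk_lt_mk] at h₁ h₂
    obtain ⟨j, rfl⟩ : ∃ j, t = p.length + (j + 1) := ⟨t - p.length - 1, by omega⟩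
    have hj : j < q.length := by omega
    simpa [List.getElem_append_right, List.getElem_append_left hj] using
      hQ _ (List.getElem_mem hj)

namespace CommWord

variable {ι : Type*} (r : ι → ι → Prop)

def letterInv (x : ι × Bool) : ι × Bool := (x.1, !x.2)

@[simp] lemma letterInv_letterInv (x : ι × Bool) : letterInv (letterInv x) = x := by
  simp [letterInv]

inductive Swap : List (ι × Bool) → List (ι × Bool) → Prop
  | intro (a b : List (ι × Bool)) {x y : ι × Bool} :
      r x.1 y.1 → Swap (a ++ x :: y :: b) (a ++ y :: x :: b)

def SwapEquiv : List (ι × Bool) → List (ι × Bool) → Prop := Relation.ReflTransGen (Swap r)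

/-- `Extract r x w u` says that `w = p ++ x :: q` with every letter of `p` commuting with `x`,
and `u = p ++ q`. -/
inductive Extract (x : ι × Bool) : List (ι × Bool) → List (ι × Bool) → Prop
  | head (u : List (ι × Bool)) : Extract x (x :: u) u
  | cons {z : ι × Bool} {w u : List (ι × Bool)} :
      r z.1 x.1 → Extract x w u → Extract x (z :: w) (z :: u)

/-- A pair of mutually inverse letters with only commuting letters between them: the failure of
`IsReducedWord`. -/
inductive HasCancel : List (ι × Bool) → Prop
  | head {x : ι × Bool} {w u : List (ι × Bool)} : Extract r (letterInv x) w u → HasCancel (x :: w)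
  | cons (x : ι × Bool) {w : List (ι × Bool)} : HasCancel w → HasCancel (x :: w)

def Reduced (w : List (ι × Bool)) : Prop := ¬ HasCancel r w

variable {r}

section SwapEquiv

@[refl] lemma SwapEquiv.refl {w : List (ι × Bool)} : SwapEquiv r w w :=
  Relation.ReflTransGen.refl

lemma SwapEquiv.trans {w₁ w₂ w₃ : List (ι × Bool)} (h : SwapEquiv r w₁ w₂)
    (h' : SwapEquiv r w₂ w₃) : SwapEquiv r w₁ w₃ :=
  Relation.ReflTransGen.trans h h'

lemma Swap.symm [Std.Symm r] {w₁ w₂ : List (ι × Bool)} (h : Swap r w₁ w₂) : Swap r w₂ w₁ := by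
  obtain ⟨a, b, hxy⟩ := h
  exact .intro a b (Std.Symm.symm _ _ hxy)

lemma SwapEquiv.symm [Std.Symm r] {w₁ w₂ : List (ι × Bool)} (h : SwapEquiv r w₁ w₂) :
    SwapEquiv r w₂ w₁ :=
  haveI : Std.Symm (Swap r) := ⟨fun _ _ => Swap.symm⟩
  Std.Symm.symm (r := Relation.ReflTransGen (Swap r)) _ _ h

lemma Swap.cons {w₁ w₂ : List (ι × Bool)} (z : ι × Bool) (h : Swap r w₁ w₂) :
    Swap r (z :: w₁) (z :: w₂) := by
  obtain ⟨a, b, hxy⟩ := h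
  exact .intro (z :: a) b hxy

lemma SwapEquiv.cons {w₁ w₂ : List (ι × Bool)} (z : ι × Bool) (h : SwapEquiv r w₁ w₂) :
    SwapEquiv r (z :: w₁) (z :: w₂) :=
  Relation.ReflTransGen.lift (z :: ·) (fun _ _ => Swap.cons z) _ _ h

lemma swapEquiv_cons_cons {x y : ι × Bool} (w : List (ι × Bool)) (h : r x.1 y.1) :
    SwapEquiv r (x :: y :: w) (y :: x :: w) :=
  .single (.intro [] w h)

end SwapEquiv

section Extract

lemma Extract.swapEquiv {x : ι × Bool} {w u : List (ι × Bool)} (h : Extract r x w u) :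
    SwapEquiv r w (x :: u) := by
  induction h with
  | head u => exact .refl
  | cons hz _ ih => exact (ih.cons _).tail (.intro [] _ hz)

lemma Extract.exists_eq_append {x : ι × Bool} {w u : List (ι × Bool)} (h : Extract r x w u) :
    ∃ p q, w = p ++ x :: q ∧ ∀ z ∈ p, r z.1 x.1 := by
  induction h with
  | head u => exact ⟨[], u, rfl, by simp⟩
  | cons hz _ ih =>
    obtain ⟨p, q, rfl, hp⟩ := ih
    exact ⟨_ :: p, q, rfl, by simpa [hz] using hp⟩

lemma Extract.of_cons_of_ne {x z : ι × Bool} {w u : List (ι × Bool)} (h : Extract r x (z :: w) u)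
    (hne : z ≠ x) : ∃ u', Extract r x w u' ∧ u = z :: u' := by
  rcases h with _ | ⟨-, h⟩
  · exact absurd rfl hne
  · exact ⟨_, h, rfl⟩

lemma Extract.of_swap {x : ι × Bool} {w₁ w₂ u : List (ι × Bool)} (hs : Swap r w₁ w₂)
    (h : Extract r x w₂ u) : ∃ u', Extract r x w₁ u' ∧ SwapEquiv r u' u := by
  obtain ⟨a, b, hyz⟩ := hs
  induction a generalizing u with
  | nil =>
    rcases h with _ | ⟨hy, h⟩
    · exact ⟨_, .cons hyz (.head _), .refl⟩
    · rcases h with _ | ⟨hz, h⟩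
      · exact ⟨_, .head _, .refl⟩
      · exact ⟨_, .cons hz (.cons hy h), swapEquiv_cons_cons _ hyz⟩
  | cons z a ih =>
    rcases h with _ | ⟨hz, h⟩
    · exact ⟨_, .head _, .single (.intro a b hyz)⟩
    · obtain ⟨u', h', hu'⟩ := ih h
      exact ⟨_, .cons hz h', hu'.cons z⟩

lemma SwapEquiv.extract [Std.Symm r] {x : ι × Bool} {w u : List (ι × Bool)}
    (h : SwapEquiv r w (x :: u)) : ∃ u', Extract r x w u' ∧ SwapEquiv r u' u := by
  have h' := h.symm
  clear h
  induction h' with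
  | refl => exact ⟨u, .head u, .refl⟩
  | tail _ hs ih =>
    obtain ⟨u₁, h₁, hu₁⟩ := ih
    obtain ⟨u₂, h₂, hu₂⟩ := h₁.of_swap hs.symm
    exact ⟨u₂, h₂, hu₂.trans hu₁⟩

lemma SwapEquiv.of_cons_cons [Std.Symm r] {x : ι × Bool} {w₁ w₂ : List (ι × Bool)}
    (h : SwapEquiv r (x :: w₁) (x :: w₂)) : SwapEquiv r w₁ w₂ := by
  obtain ⟨u, hx, hu⟩ := h.symm.extract
  rcases hx with _ | ⟨-, hx⟩
  · exact hu.symm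
  · exact (hx.swapEquiv.trans hu).symm

end Extract

section Reduced

lemma HasCancel.exists_eq_append {w : List (ι × Bool)} (h : HasCancel r w) :
    ∃ p x q s, w = p ++ x :: (q ++ letterInv x :: s) ∧ ∀ z ∈ q, r z.1 x.1 := by
  induction h with
  | head hx =>
    obtain ⟨q, s, rfl, hq⟩ := hx.exists_eq_append
    exact ⟨[], _, q, s, rfl, hq⟩
  | cons y _ ih =>
    obtain ⟨p, x, q, s, rfl, hq⟩ := ih
    exact ⟨y :: p, x, q, s, rfl, hq⟩

lemma HasCancel.of_swap [Std.Symm r] {w₁ w₂ : List (ι × Bool)} (hs : Swap r w₁ w₂)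
    (h : HasCancel r w₂) : HasCancel r w₁ := by
  obtain ⟨a, b, hxy⟩ := hs
  induction a with
  | nil =>
    rcases h with ⟨hy⟩ | ⟨_, h⟩
    · rcases hy with _ | ⟨hx, hy⟩
      · exact .head (by simpa using Extract.head (r := r) _)
      · exact .cons _ (.head hy)
    · rcases h with ⟨hx⟩ | ⟨_, h⟩
      · exact .head (.cons (Std.Symm.symm _ _ hxy) hx)
      · exact .cons _ (.cons _ h)
  | cons z a ih =>
    rcases h with ⟨hz⟩ | ⟨_, h⟩
    · obtain ⟨u, hz', -⟩ := hz.of_swap (.intro a b hxy)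
      exact .head hz'
    · exact .cons z (ih h)

lemma Reduced.of_swapEquiv [Std.Symm r] {w₁ w₂ : List (ι × Bool)} (h : SwapEquiv r w₁ w₂)
    (hw : Reduced r w₁) : Reduced r w₂ := by
  induction h with
  | refl => exact hw
  | tail _ hs ih => exact fun hc => ih (hc.of_swap hs)

lemma Reduced.of_cons {x : ι × Bool} {w : List (ι × Bool)} (h : Reduced r (x :: w)) :
    Reduced r w :=
  fun hc => h (.cons x hc)

lemma not_reduced_cons_letterInv_cons (x : ι × Bool) (w : List (ι × Bool)) :
    ¬ Reduced r (x :: letterInv x :: w) :=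
  fun h => h (.head (.head w))

end Reduced

section LeftMul

variable (r) in
/-- `v` is a reduced form of the product `x · w`: either `x :: w` itself, or what is left of `w`
once a letter `letterInv x` swapped to its front is cancelled against `x`. -/
def LeftMul (x : ι × Bool) (w v : List (ι × Bool)) : Prop :=
  SwapEquiv r (x :: w) v ∨ SwapEquiv r w (letterInv x :: v)

variable [Std.Symm r]

lemma exists_leftMul (x : ι × Bool) {w : List (ι × Bool)} (hw : Reduced r w) :
    ∃ v, Reduced r v ∧ LeftMul r x w v := by
  by_cases hx : Reduced r (x :: w)
  · exact ⟨x :: w, hx, .inl .refl⟩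
  · rcases not_not.mp hx with ⟨hx⟩ | ⟨_, h⟩
    · exact ⟨_, (hw.of_swapEquiv hx.swapEquiv).of_cons, .inr hx.swapEquiv⟩
    · exact absurd h hw

lemma LeftMul.swapEquiv {x : ι × Bool} {w v v' : List (ι × Bool)}
    (hv : Reduced r v) (hv' : Reduced r v') (h : LeftMul r x w v) (h' : LeftMul r x w v') :
    SwapEquiv r v v' := by
  rcases h with h | h <;> rcases h' with h' | h'
  · exact h.symm.trans h'
  · exact absurd (hv.of_swapEquiv (h.symm.trans (h'.cons x)))
      (not_reduced_cons_letterInv_cons x v')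
  · exact absurd (hv'.of_swapEquiv (h'.symm.trans (h.cons x)))
      (not_reduced_cons_letterInv_cons x v)
  · exact (h.symm.trans h').of_cons_cons

lemma LeftMul.of_swapEquiv {x : ι × Bool} {w w' v : List (ι × Bool)}
    (hw : SwapEquiv r w w') (h : LeftMul r x w v) : LeftMul r x w' v := by
  rcases h with h | h
  · exact .inl ((hw.symm.cons x).trans h)
  · exact .inr (hw.symm.trans h)

lemma LeftMul.inv {x : ι × Bool} {w v : List (ι × Bool)}
    (h : LeftMul r x w v) : LeftMul r (letterInv x) v w := by
  rcases h with h | h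
  · exact .inr (by simpa using h.symm)
  · exact .inl h.symm

lemma LeftMul.comm {x y : ι × Bool} (hne : x.1 ≠ y.1) (hxy : r x.1 y.1)
    {w w₁ w₂ : List (ι × Bool)} (hw : Reduced r w) (hw₂ : Reduced r w₂)
    (h₁ : LeftMul r y w w₁) (h₂ : LeftMul r x w₁ w₂) :
    ∃ w₃, Reduced r w₃ ∧ LeftMul r x w w₃ ∧ LeftMul r y w₃ w₂ := by
  have hyx : r y.1 x.1 := Std.Symm.symm _ _ hxy
  have hne' : ∀ {b b' : Bool}, (y.1, b) ≠ (x.1, b') := fun h => hne (congrArg Prod.fst h).symm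
  rcases h₁ with h₁ | h₁ <;> rcases h₂ with h₂ | h₂
  · have h : SwapEquiv r (y :: x :: w) w₂ :=
      (swapEquiv_cons_cons w hyx).trans ((h₁.cons x).trans h₂)
    exact ⟨x :: w, (hw₂.of_swapEquiv h.symm).of_cons, .inl .refl, .inl h⟩
  · obtain ⟨u, hu, hu₂⟩ := (h₁.trans h₂).extract
    obtain ⟨v, hv, rfl⟩ := hu.of_cons_of_ne hne'
    exact ⟨_, (hw.of_swapEquiv hv.swapEquiv).of_cons, .inr hv.swapEquiv, .inl hu₂⟩
  · have hxw : Reduced r (x :: w) := by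
      rintro (⟨hx⟩ | ⟨_, h⟩)
      · obtain ⟨u, hu, -⟩ := (h₁.symm.trans hx.swapEquiv).extract
        obtain ⟨v, hv, -⟩ := hu.of_cons_of_ne hne'
        exact hw₂.of_swapEquiv h₂.symm (.head hv)
      · exact hw h
    refine ⟨x :: w, hxw, .inl .refl, .inr ?_⟩
    exact (h₁.cons x).trans ((swapEquiv_cons_cons (y := letterInv y) w₁ hxy).trans (h₂.cons _))
  · have h : SwapEquiv r w (letterInv x :: letterInv y :: w₂) :=
      h₁.trans ((h₂.cons _).trans (swapEquiv_cons_cons w₂ hyx))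
    exact ⟨_, (hw.of_swapEquiv h).of_cons, .inr h, .inr .refl⟩

end LeftMul

section Action

variable [Std.Symm r]

variable (r) in
def reducedSetoid : Setoid {w : List (ι × Bool) // Reduced r w} where
  r w v := SwapEquiv r w.1 v.1
  iseqv := ⟨fun _ => .refl, SwapEquiv.symm, SwapEquiv.trans⟩

variable (r) in
def ReducedClass : Type _ := Quotient (reducedSetoid r)

def ReducedClass.mk (w : List (ι × Bool)) (hw : Reduced r w) : ReducedClass r :=
  Quotient.mk _ ⟨w, hw⟩

lemma ReducedClass.mk_eq_mk_iff {w v : List (ι × Bool)} {hw : Reduced r w} {hv : Reduced r v} :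
    mk w hw = mk v hv ↔ SwapEquiv r w v :=
  Quotient.eq

@[elab_as_elim]
lemma ReducedClass.ind {p : ReducedClass r → Prop} (h : ∀ w hw, p (mk w hw)) (s : ReducedClass r) :
    p s :=
  Quotient.ind (fun w => h w.1 w.2) s

noncomputable def letterAct (x : ι × Bool) : ReducedClass r → ReducedClass r :=
  Quotient.map (fun w => ⟨_, (exists_leftMul x w.2).choose_spec.1⟩) fun w w' hw =>
    have hv := (exists_leftMul x w.2).choose_spec
    have hv' := (exists_leftMul x w'.2).choose_spec
    (hv.2.of_swapEquiv hw).swapEquiv hv.1 hv'.1 hv'.2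

lemma letterAct_mk {x : ι × Bool} {w v : List (ι × Bool)} (hw : Reduced r w) (hv : Reduced r v)
    (h : LeftMul r x w v) : letterAct x (.mk w hw) = .mk v hv :=
  have hv₀ := (exists_leftMul x hw).choose_spec
  ReducedClass.mk_eq_mk_iff.mpr (hv₀.2.swapEquiv hv₀.1 hv h)

lemma letterAct_letterInv_letterAct (x : ι × Bool) (s : ReducedClass r) :
    letterAct (letterInv x) (letterAct x s) = s := by
  induction s using ReducedClass.ind with
  | h w hw =>
    obtain ⟨v, hv, h⟩ := exists_leftMul x hw
    rw [letterAct_mk hw hv h, letterAct_mk hv hw h.inv]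

lemma letterAct_comm {x y : ι × Bool} (hne : x.1 ≠ y.1) (hxy : r x.1 y.1) (s : ReducedClass r) :
    letterAct x (letterAct y s) = letterAct y (letterAct x s) := by
  induction s using ReducedClass.ind with
  | h w hw =>
    obtain ⟨w₁, hw₁, h₁⟩ := exists_leftMul y hw
    obtain ⟨w₂, hw₂, h₂⟩ := exists_leftMul x hw₁
    obtain ⟨w₃, hw₃, h₃, h₄⟩ := LeftMul.comm hne hxy hw hw₂ h₁ h₂
    rw [letterAct_mk hw hw₁ h₁, letterAct_mk hw₁ hw₂ h₂, letterAct_mk hw hw₃ h₃,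
      letterAct_mk hw₃ hw₂ h₄]

noncomputable def letterPerm (i : ι) : Equiv.Perm (ReducedClass r) where
  toFun := letterAct (i, true)
  invFun := letterAct (i, false)
  left_inv := letterAct_letterInv_letterAct (i, true)
  right_inv := letterAct_letterInv_letterAct (i, false)

lemma letterPerm_commute {i j : ι} (hne : i ≠ j) (hij : r i j) :
    Commute (letterPerm (r := r) i) (letterPerm j) :=
  Equiv.ext (letterAct_comm hne hij)

end Action

end CommWord

section SwapStep

variable {m : ℕ} {l₁ l₂ : List (PathGroup m)}

lemma SwapStep.prod_eq (h : SwapStep l₁ l₂) : l₁.prod = l₂.prod := by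
  obtain ⟨a, b, x, y, hxy, rfl, rfl⟩ := h
  simp only [List.prod_append, List.prod_cons, ← mul_assoc, hxy.eq]

lemma SwapStep.length_eq (h : SwapStep l₁ l₂) : l₁.length = l₂.length := by
  obtain ⟨a, b, x, y, -, rfl, rfl⟩ := h
  simp

lemma prod_eq_of_reflTransGen_swapStep (h : Relation.ReflTransGen SwapStep l₁ l₂) :
    l₁.prod = l₂.prod := by
  induction h with
  | refl => rfl
  | tail _ h ih => exact ih.trans h.prod_eq

lemma length_eq_of_reflTransGen_swapStep (h : Relation.ReflTransGen SwapStep l₁ l₂) :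
    l₁.length = l₂.length := by
  induction h with
  | refl => rfl
  | tail _ h ih => exact ih.trans h.length_eq

end SwapStep

open CommWord

namespace PathGroup

variable {m : ℕ}

def Adj (m : ℕ) (i j : Fin m) : Prop := (i : ℕ) ≤ j + 1 ∧ (j : ℕ) ≤ i + 1

instance : Std.Symm (Adj m) := ⟨fun _ _ h => ⟨h.2, h.1⟩⟩

def letter (x : Fin m × Bool) : PathGroup m := cond x.2 (pathGen m x.1) (pathGen m x.1)⁻¹

lemma letter_letterInv (x : Fin m × Bool) : letter (letterInv x) = (letter x)⁻¹ := by
  rcases x with ⟨i, _ | _⟩ <;> simp [letter, letterInv]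

lemma letter_mem_pathLetters (x : Fin m × Bool) : letter x ∈ pathLetters m := by
  rcases x with ⟨i, _ | _⟩
  exacts [⟨i, .inr rfl⟩, ⟨i, .inl rfl⟩]

lemma exists_eq_map_letter {l : List (PathGroup m)} (hl : ∀ x ∈ l, x ∈ pathLetters m) :
    ∃ w : List (Fin m × Bool), l = w.map letter := by
  induction l with
  | nil => exact ⟨[], rfl⟩
  | cons g l ih =>
    obtain ⟨w, rfl⟩ := ih fun x hx => hl x (List.mem_cons_of_mem g hx)
    obtain ⟨i, rfl | rfl⟩ := hl g List.mem_cons_self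
    exacts [⟨(i, true) :: w, rfl⟩, ⟨(i, false) :: w, rfl⟩]

lemma exists_prod_map_letter_eq (g : PathGroup m) :
    ∃ w : List (Fin m × Bool), (w.map letter).prod = g := by
  induction g using PresentedGroup.induction_on with
  | H z =>
    have hmk : PresentedGroup.mk (pathRels m) = FreeGroup.lift PresentedGroup.of :=
      FreeGroup.ext_hom _ _ fun _ => rfl
    refine ⟨z.toWord, ?_⟩
    conv_rhs => rw [← FreeGroup.mk_toWord (x := z), hmk, FreeGroup.lift_mk]
    rfl

lemma commute_pathGen_of_succ_eq {i j : Fin m} (hij : (i : ℕ) + 1 = j) :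
    Commute (pathGen m i) (pathGen m j) := by
  have h := PresentedGroup.one_of_mem (rels := pathRels m) ⟨i, j, hij, rfl⟩
  simp only [map_mul, map_inv] at h
  exact mul_inv_eq_iff_eq_mul.mp (mul_inv_eq_one.mp h)

lemma commute_letter {x y : Fin m × Bool} (h : Adj m x.1 y.1) :
    Commute (letter x) (letter y) := by
  have hgen : Commute (pathGen m x.1) (pathGen m y.1) := by
    rcases lt_trichotomy (x.1 : ℕ) y.1 with hlt | heq | hgt
    · exact commute_pathGen_of_succ_eq (by unfold Adj at h; omega)
    · rw [Fin.ext heq]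
    · exact (commute_pathGen_of_succ_eq (by unfold Adj at h; omega)).symm
  rcases x with ⟨i, _ | _⟩ <;> rcases y with ⟨j, _ | _⟩
  exacts [hgen.inv_inv, hgen.inv_left, hgen.inv_right, hgen]

noncomputable def action : PathGroup m →* Equiv.Perm (ReducedClass (Adj m)) :=
  PresentedGroup.toGroup (f := letterPerm) <| by
    rintro _ ⟨i, j, hij, rfl⟩
    have hc := letterPerm_commute (r := Adj m) (i := i) (j := j)
      (Fin.ne_of_val_ne (by omega)) ⟨by omega, by omega⟩
    simp [hc.eq]

lemma action_letter (x : Fin m × Bool) (s : ReducedClass (Adj m)) :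
    action (letter x) s = letterAct x s := by
  have hgen (i : Fin m) : action (pathGen m i) = letterPerm i := PresentedGroup.toGroup.of _
  rcases x with ⟨i, _ | _⟩
  · rw [letter, cond_false, map_inv, hgen]
    rfl
  · rw [letter, cond_true, hgen]
    rfl

lemma action_prod_map_letter {w : List (Fin m × Bool)} (hw : Reduced (Adj m) w) :
    action (w.map letter).prod (.mk [] fun h => nomatch h) = .mk w hw := by
  induction w with
  | nil => rfl
  | cons x w ih =>
    rw [List.map_cons, List.prod_cons, map_mul, Equiv.Perm.mul_apply, ih hw.of_cons,
      action_letter, letterAct_mk hw.of_cons hw (.inl .refl)]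

lemma swapEquiv_of_prod_eq {w₁ w₂ : List (Fin m × Bool)} (h₁ : Reduced (Adj m) w₁)
    (h₂ : Reduced (Adj m) w₂) (h : (w₁.map letter).prod = (w₂.map letter).prod) :
    SwapEquiv (Adj m) w₁ w₂ := by
  rw [← ReducedClass.mk_eq_mk_iff (hw := h₁) (hv := h₂), ← action_prod_map_letter h₁,
    ← action_prod_map_letter h₂, h]

lemma reflTransGen_swapStep_of_swapEquiv {w₁ w₂ : List (Fin m × Bool)}
    (h : SwapEquiv (Adj m) w₁ w₂) :
    Relation.ReflTransGen SwapStep (w₁.map letter) (w₂.map letter) :=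
  Relation.ReflTransGen.lift (List.map letter) (fun _ _ ⟨a, b, hxy⟩ =>
    ⟨a.map letter, b.map letter, _, _, commute_letter hxy, by simp, by simp⟩) _ _ h

lemma not_isReducedWord_iff {l : List (PathGroup m)} :
    ¬ IsReducedWord l ↔ ∃ p x q y s, l = p ++ x :: (q ++ y :: s) ∧ x * y = 1 ∧
      ∀ z ∈ q, Commute z x := by
  simp only [IsReducedWord, not_forall, not_exists, not_and, not_not, exists_prop]
  exact List.exists_get_pair_iff_exists_eq_append l (· * · = 1) Commute

lemma reduced_of_isReducedWord {w : List (Fin m × Bool)} (h : IsReducedWord (w.map letter)) :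
    Reduced (Adj m) w := by
  intro hc
  obtain ⟨p, x, q, s, rfl, hq⟩ := hc.exists_eq_append
  refine not_isReducedWord_iff.mpr ⟨p.map letter, letter x, q.map letter, letter (letterInv x),
    s.map letter, by simp, by simp [letter_letterInv], ?_⟩ h
  simp only [List.mem_map, forall_exists_index, and_imp, forall_apply_eq_imp_iff₂]
  exact fun z hz => commute_letter (hq z hz)

theorem exists_isReducedWord_prod_eq (l : List (PathGroup m))
    (hl : ∀ x ∈ l, x ∈ pathLetters m) :
    ∃ l', (∀ x ∈ l', x ∈ pathLetters m) ∧ IsReducedWord l' ∧ l'.prod = l.prod := by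
  by_cases h : IsReducedWord l
  · exact ⟨l, hl, h, rfl⟩
  obtain ⟨p, x, q, y, s, hl_eq, hxy, hq⟩ := not_isReducedWord_iff.mp h
  have hlen : (p ++ q ++ s).length < l.length := by simp [hl_eq]
  obtain ⟨l', hl', hred, hprod⟩ := exists_isReducedWord_prod_eq (p ++ q ++ s)
    fun z hz => hl z (by simp only [hl_eq, List.mem_append, List.mem_cons] at hz ⊢; tauto)
  refine ⟨l', hl', hred, hprod.trans ?_⟩
  subst hl_eq
  have hxq : x * q.prod = q.prod * x :=
    (Commute.list_prod_right _ _ fun z hz => (hq z hz).symm).eq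
  simp only [List.prod_append, List.prod_cons, mul_assoc]
  rw [← mul_assoc x, hxq, mul_assoc, ← mul_assoc x, hxy, one_mul]
termination_by l.length

theorem exists_isReducedWord (g : PathGroup m) :
    ∃ l : List (PathGroup m), (∀ x ∈ l, x ∈ pathLetters m) ∧ IsReducedWord l ∧ l.prod = g := by
  obtain ⟨w, rfl⟩ := exists_prod_map_letter_eq g
  exact exists_isReducedWord_prod_eq _ (List.forall_mem_map.mpr fun x _ => letter_mem_pathLetters x)

theorem prod_eq_iff_reflTransGen_swapStep {l₁ l₂ : List (PathGroup m)}
    (hl₁ : ∀ x ∈ l₁, x ∈ pathLetters m) (hl₂ : ∀ x ∈ l₂, x ∈ pathLetters m)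
    (hr₁ : IsReducedWord l₁) (hr₂ : IsReducedWord l₂) :
    l₁.prod = l₂.prod ↔ Relation.ReflTransGen SwapStep l₁ l₂ := by
  obtain ⟨w₁, rfl⟩ := exists_eq_map_letter hl₁
  obtain ⟨w₂, rfl⟩ := exists_eq_map_letter hl₂
  refine ⟨fun h => ?_, prod_eq_of_reflTransGen_swapStep⟩
  exact reflTransGen_swapStep_of_swapEquiv <|
    swapEquiv_of_prod_eq (reduced_of_isReducedWord hr₁) (reduced_of_isReducedWord hr₂) h

end PathGroup

open PathGroup in
theorem stmt17_general (m : ℕ) :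
    (∀ g : PathGroup m, ∃ l : List (PathGroup m),
      (∀ x ∈ l, x ∈ pathLetters m) ∧ IsReducedWord l ∧ l.prod = g) ∧
    (∀ l₁ l₂ : List (PathGroup m),
      (∀ x ∈ l₁, x ∈ pathLetters m) → (∀ x ∈ l₂, x ∈ pathLetters m) →
      IsReducedWord l₁ → IsReducedWord l₂ →
      (l₁.prod = l₂.prod ↔ Relation.ReflTransGen SwapStep l₁ l₂)) ∧
    (∀ l₁ l₂ : List (PathGroup m),
      (∀ x ∈ l₁, x ∈ pathLetters m) → (∀ x ∈ l₂, x ∈ pathLetters m) →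
      IsReducedWord l₁ → IsReducedWord l₂ →
      l₁.prod = l₂.prod → l₁.length = l₂.length) :=
  ⟨exists_isReducedWord, fun _ _ => prod_eq_iff_reflTransGen_swapStep,
    fun _ _ hl₁ hl₂ hr₁ hr₂ h => length_eq_of_reflTransGen_swapStep
      ((prod_eq_iff_reflTransGen_swapStep hl₁ hl₂ hr₁ hr₂).mp h)⟩

/-- Solution of the word problem in `G = ⟨g_1,…,g_m ∣ [g_i,g_{i+1}]=1⟩`: every element is
represented by a reduced word; two reduced words represent the same element iff they are
related by a finite sequence of swaps of adjacent commuting letters; in particular the length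
of a reduced word representing a given element is well defined. -/
theorem stmt17 (m : ℕ) (hm : 1 ≤ m) :
    (∀ g : PathGroup m, ∃ l : List (PathGroup m),
      (∀ x ∈ l, x ∈ pathLetters m) ∧ IsReducedWord l ∧ l.prod = g) ∧
    (∀ l₁ l₂ : List (PathGroup m),
      (∀ x ∈ l₁, x ∈ pathLetters m) → (∀ x ∈ l₂, x ∈ pathLetters m) →
      IsReducedWord l₁ → IsReducedWord l₂ →
      (l₁.prod = l₂.prod ↔ Relation.ReflTransGen SwapStep l₁ l₂)) ∧
    (∀ l₁ l₂ : List (PathGroup m),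
      (∀ x ∈ l₁, x ∈ pathLetters m) → (∀ x ∈ l₂, x ∈ pathLetters m) →
      IsReducedWord l₁ → IsReducedWord l₂ →
      l₁.prod = l₂.prod → l₁.length = l₂.length) :=
  stmt17_general m
end
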